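/- arXiv:1403.7673 — 8 statements merged into one kernel-verified Lean document; each statement's English description precedes it below -/
import Mathlib

section
/- Let (X₁,d₁) be a path metric space whose metric d₁ is unbounded, and let (X₂,d₂) be a metric space whose metric d₂ is unbounded. Equip the product X₁ × X₂ with the metric d((x₁,x₂),(y₁,y₂)) = max{d₁(x₁,y₁), d₂(x₂,y₂)}. Then (X₁ × X₂, d) is not Gromov hyperbolic. -/
open Set Metric Filter

/-- A metric space `X` is *Gromov hyperbolic* if
`sup_{p,q,x,w ∈ X} ( min{(p,x)_w, (x,q)_w} − (p,q)_w ) < ∞`, where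
`(x,y)_z = dist x z + dist z y - dist x y` denotes the Gromov product. -/
def GromovHyperbolic (X : Type*) [MetricSpace X] : Prop :=
  ∃ C : ℝ, ∀ p q x w : X,
    min (dist p w + dist w x - dist p x) (dist x w + dist w q - dist x q)
      - (dist p w + dist w q - dist p q) ≤ C

/-- A metric space is a *path metric space* if any two points `x, y` can be joined,
for every `ε > 0`, by a rectifiable path (continuous curve of finite length, length
measured as total variation with respect to the metric) of length `≤ dist x y + ε`. -/
def IsPathMetricSpace (X : Type*) [MetricSpace X] : Prop :=
  ∀ x y : X, ∀ ε > 0, ∃ γ : ℝ → X, ContinuousOn γ (Icc 0 1) ∧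
    γ 0 = x ∧ γ 1 = y ∧ eVariationOn γ (Icc 0 1) ≤ ENNReal.ofReal (dist x y + ε)

/-- A metric is bounded if `sup_{x,y} dist x y < ∞`. -/
def MetricBounded (X : Type*) [MetricSpace X] : Prop :=
  ∃ C : ℝ, ∀ x y : X, dist x y ≤ C

/-- **Proposition 1.** If `(X₁,d₁)` is a path metric space with `d₁` unbounded and
`(X₂,d₂)` is a metric space with `d₂` unbounded, then `X₁ × X₂` equipped with the
max-metric (which is the product metric, `Prod.dist_eq`) is not Gromov hyperbolic. -/
theorem product_of_unbounded_not_gromovHyperbolic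
    {X₁ X₂ : Type*} [MetricSpace X₁] [MetricSpace X₂]
    (hpath : IsPathMetricSpace X₁)
    (hub₁ : ∀ C : ℝ, ∃ x y : X₁, C < dist x y)
    (hub₂ : ∀ C : ℝ, ∃ x y : X₂, C < dist x y) :
    ¬ GromovHyperbolic (X₁ × X₂) := by
  rintro ⟨C, hC⟩
  -- pick far apart points in X₁
  obtain ⟨a, b, hab⟩ := hub₁ (2 * |C| + 1)
  have hd1 : 1 < dist a b := by have := abs_nonneg C; linarith
  -- path from a to b of length ≤ dist a b + 1
  obtain ⟨γ, hγc, hγ0, hγ1, hγv⟩ := hpath a b 1 one_pos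
  -- find approximate midpoint via IVT
  have hcont : ContinuousOn (fun t => dist a (γ t) - dist (γ t) b) (Icc 0 1) :=
    ((continuous_const.dist continuous_id).comp_continuousOn hγc).sub
      ((continuous_id.dist continuous_const).comp_continuousOn hγc)
  have hmem : (0:ℝ) ∈ Icc (dist a (γ 0) - dist (γ 0) b) (dist a (γ 1) - dist (γ 1) b) := by
    rw [hγ0, hγ1]
    simp only [dist_self, mem_Icc]
    constructor
    · linarith [dist_nonneg (x := a) (y := b)]
    · linarith [dist_nonneg (x := a) (y := b)]
  obtain ⟨t, ht, hft⟩ := intermediate_value_Icc (by norm_num : (0:ℝ) ≤ 1) hcont hmem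
  set m : X₁ := γ t with hm
  have hAB : dist a m = dist m b := by
    have : dist a m - dist m b = 0 := hft
    linarith
  -- dist a m ≤ (dist a b + 1)/2 via variation additivity
  have hvar : edist a m + edist m b ≤ ENNReal.ofReal (dist a b + 1) := by
    have h1 : edist a m ≤ eVariationOn γ (Icc 0 t) := by
      rw [← hγ0, hm]
      exact eVariationOn.edist_le γ (left_mem_Icc.2 ht.1) (right_mem_Icc.2 ht.1)
    have h2 : edist m b ≤ eVariationOn γ (Icc t 1) := by
      rw [← hγ1, hm]
      exact eVariationOn.edist_le γ (left_mem_Icc.2 ht.2) (right_mem_Icc.2 ht.2)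
    have h3 : eVariationOn γ (Icc 0 t) + eVariationOn γ (Icc t 1)
        = eVariationOn γ (Icc 0 1) := by
      have := eVariationOn.Icc_add_Icc γ (s := (univ : Set ℝ)) ht.1 ht.2 (mem_univ t)
      simpa using this
    calc edist a m + edist m b ≤ eVariationOn γ (Icc 0 t) + eVariationOn γ (Icc t 1) :=
          add_le_add h1 h2
      _ = eVariationOn γ (Icc 0 1) := h3
      _ ≤ ENNReal.ofReal (dist a b + 1) := hγv
  have hA2 : dist a m + dist m b ≤ dist a b + 1 := by
    have h : ENNReal.ofReal (dist a m + dist m b) ≤ ENNReal.ofReal (dist a b + 1) := by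
      rw [ENNReal.ofReal_add dist_nonneg dist_nonneg, ← edist_dist, ← edist_dist]
      exact hvar
    exact (ENNReal.ofReal_le_ofReal_iff (by linarith)).1 h
  -- far apart points in X₂
  obtain ⟨u, v, huv⟩ := hub₂ (dist a b + 1)
  have hAD : dist a m ≤ dist u v := by linarith [dist_nonneg (x := a) (y := m)]
  have hBD : dist m b ≤ dist u v := by linarith [dist_nonneg (x := m) (y := b)]
  -- the quadruple
  have key := hC (a, u) (b, u) (m, v) (m, u)
  have e1 : dist ((a, u) : X₁ × X₂) (m, u) = dist a m := by
    simp [Prod.dist_eq, dist_nonneg]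
  have e2 : dist ((m, u) : X₁ × X₂) (m, v) = dist u v := by
    simp [Prod.dist_eq, dist_nonneg]
  have e3 : dist ((a, u) : X₁ × X₂) (m, v) = dist u v := by
    simp only [Prod.dist_eq]
    exact max_eq_right hAD
  have e4 : dist ((m, v) : X₁ × X₂) (m, u) = dist u v := by
    simp [Prod.dist_eq, dist_nonneg, dist_comm]
  have e5 : dist ((m, v) : X₁ × X₂) (b, u) = dist u v := by
    simp only [Prod.dist_eq, dist_comm v u]
    exact max_eq_right hBD
  have e6 : dist ((m, u) : X₁ × X₂) (b, u) = dist m b := by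
    simp [Prod.dist_eq, dist_nonneg]
  have e7 : dist ((a, u) : X₁ × X₂) (b, u) = dist a b := by
    simp [Prod.dist_eq, dist_nonneg]
  rw [e1, e2, e3, e4, e5, e6, e7] at key
  have r1 : dist a m + dist u v - dist u v = dist a m := by ring
  have r2 : dist u v + dist m b - dist u v = dist m b := by ring
  rw [r1, r2, hAB, min_self] at key
  have := le_abs_self C
  linarith
end

section
/- Let (X₁,d₁) and (X₂,d₂) be metric spaces, at least one of which is a path metric space, and equip X₁ × X₂ with the metric d((x₁,x₂),(y₁,y₂)) = max{d₁(x₁,y₁), d₂(x₂,y₂)}. Then (X₁ × X₂, d) is Gromov hyperbolic if and only if one of the two factors is Gromov hyperbolic and the metric of the other factor is bounded. -/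
open Set Metric Filter

lemma swap_hyp {X₁ X₂ : Type*} [MetricSpace X₁] [MetricSpace X₂]
    (h : GromovHyperbolic (X₁ × X₂)) : GromovHyperbolic (X₂ × X₁) := by
  obtain ⟨C, h⟩ := h
  refine ⟨C, fun p q x w => ?_⟩
  have := h (p.2, p.1) (q.2, q.1) (x.2, x.1) (w.2, w.1)
  simpa [Prod.dist_eq, max_comm] using this

lemma factor1_hyp {X₁ X₂ : Type*} [MetricSpace X₁] [MetricSpace X₂] [Nonempty X₂]
    (h : GromovHyperbolic (X₁ × X₂)) : GromovHyperbolic X₁ := by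
  obtain ⟨C, h⟩ := h
  obtain ⟨b⟩ := ‹Nonempty X₂›
  refine ⟨C, fun p q x w => ?_⟩
  have := h (p, b) (q, b) (x, b) (w, b)
  simpa [Prod.dist_eq, max_eq_left dist_nonneg] using this

lemma bounded_prod_hyp {X₁ X₂ : Type*} [MetricSpace X₁] [MetricSpace X₂]
    (h : GromovHyperbolic X₁) (hb : MetricBounded X₂) : GromovHyperbolic (X₁ × X₂) := by
  obtain ⟨C₁, h⟩ := h
  obtain ⟨C₂, hb⟩ := hb
  refine ⟨C₁ + 3 * max C₂ 0, fun p q x w => ?_⟩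
  have key : ∀ P Q : X₁ × X₂, dist P.1 Q.1 ≤ dist P Q ∧ dist P Q ≤ dist P.1 Q.1 + max C₂ 0 := by
    intro P Q
    rw [Prod.dist_eq]
    refine ⟨le_max_left _ _, max_le (by linarith [le_max_right C₂ (0:ℝ)]) ?_⟩
    have := hb P.2 Q.2
    have := dist_nonneg (x := P.1) (y := Q.1)
    have := le_max_left C₂ (0:ℝ)
    linarith
  have h1 := key p w; have h2 := key w x; have h3 := key p x
  have h4 := key x w; have h5 := key w q; have h6 := key x q
  have h7 := key p q
  have hh := h p.1 q.1 x.1 w.1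
  rcases le_total (dist p.1 w.1 + dist w.1 x.1 - dist p.1 x.1)
      (dist x.1 w.1 + dist w.1 q.1 - dist x.1 q.1) with hle | hle
  · rw [min_eq_left hle] at hh
    have := min_le_left (dist p w + dist w x - dist p x) (dist x w + dist w q - dist x q)
    linarith [h1.1, h1.2, h2.1, h2.2, h3.1, h3.2, h5.1, h5.2, h7.1, h7.2]
  · rw [min_eq_right hle] at hh
    have := min_le_right (dist p w + dist w x - dist p x) (dist x w + dist w q - dist x q)
    linarith [h4.1, h4.2, h5.1, h5.2, h6.1, h6.2, h7.1, h7.2, h1.1, h1.2]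

lemma key_unbounded {X₁ X₂ : Type*} [MetricSpace X₁] [MetricSpace X₂]
    (hC : GromovHyperbolic (X₁ × X₂)) (hp : IsPathMetricSpace X₁)
    (hu₁ : ¬ MetricBounded X₁) (hu₂ : ¬ MetricBounded X₂) : False := by
  obtain ⟨C, hC⟩ := hC
  simp only [MetricBounded, not_exists, not_forall, not_le] at hu₁ hu₂
  obtain ⟨a, b, hab⟩ := hu₁ (2 * C + 8)
  set D := dist a b with hD
  have hD0 : (0 : ℝ) ≤ D := dist_nonneg
  obtain ⟨γ, hγc, hγ0, hγ1, hγv⟩ := hp a b 1 one_pos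
  -- midpoint via IVT
  have hcont : ContinuousOn (fun t => dist a (γ t)) (Icc 0 1) :=
    (continuous_const.dist continuous_id).comp_continuousOn hγc
  have hIVT := intermediate_value_Icc (zero_le_one (α := ℝ)) hcont
  have hmem : D / 2 ∈ Icc (dist a (γ 0)) (dist a (γ 1)) := by
    rw [hγ0, hγ1, dist_self]
    constructor <;> linarith
  obtain ⟨t, ht, hm⟩ := hIVT hmem
  set m := γ t with hmdef
  have ham : dist a m = D / 2 := hm
  -- variation bound: dist a m + dist m b ≤ D + 1
  have h1 : edist a m ≤ eVariationOn γ (Icc 0 t) := by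
    rw [← hγ0]
    exact eVariationOn.edist_le γ ⟨le_refl 0, ht.1⟩ ⟨ht.1, le_refl t⟩
  have h2 : edist m b ≤ eVariationOn γ (Icc t 1) := by
    rw [← hγ1]
    exact eVariationOn.edist_le γ ⟨le_refl t, ht.2⟩ ⟨ht.2, le_refl 1⟩
  have hadd : eVariationOn γ (Icc 0 t) + eVariationOn γ (Icc t 1)
      = eVariationOn γ (Icc 0 1) := by
    have := eVariationOn.Icc_add_Icc γ (s := (univ : Set ℝ)) ht.1 ht.2 (mem_univ t)
    simpa [univ_inter] using this
  have hsum : dist a m + dist m b ≤ D + 1 := by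
    have : edist a m + edist m b ≤ ENNReal.ofReal (D + 1) :=
      le_trans (add_le_add h1 h2) (by rw [hadd]; exact hγv)
    rw [edist_dist, edist_dist, ← ENNReal.ofReal_add dist_nonneg dist_nonneg] at this
    exact (ENNReal.ofReal_le_ofReal_iff (by linarith)).mp this
  have hmb : D / 2 ≤ dist m b := by
    have := dist_triangle a m b
    linarith
  obtain ⟨u, v, huv⟩ := hu₂ (D + 1)
  -- evaluate hyperbolicity inequality at p=(a,u), q=(b,u), x=(m,v), w=(m,u)
  have hh := hC (a, u) (b, u) (m, v) (m, u)
  simp only [Prod.dist_eq] at hh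
  have e1 : max (dist a m) (dist u u) = dist a m := by
    rw [dist_self]; exact max_eq_left dist_nonneg
  have e2 : max (dist m m) (dist u v) = dist u v := by
    rw [dist_self]; exact max_eq_right dist_nonneg
  have e3 : max (dist a m) (dist u v) = dist u v :=
    max_eq_right (by rw [ham]; linarith)
  have e4 : max (dist m m) (dist v u) = dist u v := by
    rw [dist_self, dist_comm v u]; exact max_eq_right dist_nonneg
  have e5 : max (dist m b) (dist v u) = dist u v := by
    rw [dist_comm v u]; exact max_eq_right (by linarith)
  have e6 : max (dist m b) (dist u u) = dist m b := by
    rw [dist_self]; exact max_eq_left dist_nonneg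
  have e7 : max (dist a b) (dist u u) = dist a b := by
    rw [dist_self]; exact max_eq_left dist_nonneg
  rw [e1, e2, e3, e4, e5, e6, e7] at hh
  have hmin : D / 2 ≤ min (dist a m + dist u v - dist u v) (dist u v + dist m b - dist u v) :=
    le_min (by linarith) (by linarith)
  linarith

/-- **Proposition 2.** Let `(X₁,d₁)` and `(X₂,d₂)` be metric spaces, one of which is a
path metric space, and equip `X₁ × X₂` with the max-metric (the product metric,
`Prod.dist_eq`). Then `X₁ × X₂` is Gromov hyperbolic if and only if one of the factors
is Gromov hyperbolic and the metric of the other one is bounded. -/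
theorem product_gromovHyperbolic_iff
    {X₁ X₂ : Type*} [MetricSpace X₁] [MetricSpace X₂] [Nonempty X₁] [Nonempty X₂]
    (hpath : IsPathMetricSpace X₁ ∨ IsPathMetricSpace X₂) :
    GromovHyperbolic (X₁ × X₂) ↔
      (GromovHyperbolic X₁ ∧ MetricBounded X₂) ∨
        (GromovHyperbolic X₂ ∧ MetricBounded X₁) := by
  constructor
  · intro h
    have h1 : GromovHyperbolic X₁ := factor1_hyp h
    have h2 : GromovHyperbolic X₂ := factor1_hyp (swap_hyp h)
    by_cases b2 : MetricBounded X₂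
    · exact Or.inl ⟨h1, b2⟩
    · by_cases b1 : MetricBounded X₁
      · exact Or.inr ⟨h2, b1⟩
      · exfalso
        rcases hpath with hp | hp
        · exact key_unbounded h hp b1 b2
        · exact key_unbounded (swap_hyp h) hp b2 b1
  · rintro (⟨h1, b2⟩ | ⟨h2, b1⟩)
    · exact bounded_prod_hyp h1 b2
    · exact swap_hyp (bounded_prod_hyp h2 b1)
end

section
/- Let (X₁,d₁) be a metric space admitting sequences (x_k), (y_k), (z_k) in X₁ such that d₁(x_k,y_k) → ∞, d₁(x_k,z_k)/d₁(x_k,y_k) → 1/2 and d₁(y_k,z_k)/d₁(x_k,y_k) → 1/2 as k → ∞ (the weak midpoints property with unbounded metric). Let (X₂,d₂) be a metric space whose metric d₂ is unbounded. Equip X₁ × X₂ with the metric d((x₁,x₂),(y₁,y₂)) = max{d₁(x₁,y₁), d₂(x₂,y₂)}. Then (X₁ × X₂, d) is not Gromov hyperbolic. -/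
open Set Metric Filter

/-- If `(X₁,d₁)` admits sequences `(x_k), (y_k), (z_k)` with `d₁(x_k,y_k) → ∞`,
`d₁(x_k,z_k)/d₁(x_k,y_k) → 1/2` and `d₁(y_k,z_k)/d₁(x_k,y_k) → 1/2` (the weak midpoints
property with unbounded metric), and `(X₂,d₂)` has unbounded metric, then `X₁ × X₂`
with the max-metric (the product metric, `Prod.dist_eq`) is not Gromov hyperbolic. -/
theorem product_weak_midpoints_not_gromovHyperbolic
    {X₁ X₂ : Type*} [MetricSpace X₁] [MetricSpace X₂]
    (x y z : ℕ → X₁)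
    (hxy : Tendsto (fun k => dist (x k) (y k)) atTop atTop)
    (hxz : Tendsto (fun k => dist (x k) (z k) / dist (x k) (y k)) atTop (nhds (1 / 2)))
    (hyz : Tendsto (fun k => dist (y k) (z k) / dist (x k) (y k)) atTop (nhds (1 / 2)))
    (hub₂ : ∀ C : ℝ, ∃ u v : X₂, C < dist u v) :
    ¬ GromovHyperbolic (X₁ × X₂) := by
  rintro ⟨C, hC⟩
  have h1 : ∀ᶠ k in atTop, dist (x k) (z k) / dist (x k) (y k) ∈ Set.Ioo (3/8 : ℝ) (5/8) :=
    hxz (Ioo_mem_nhds (by norm_num) (by norm_num))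
  have h2 : ∀ᶠ k in atTop, dist (y k) (z k) / dist (x k) (y k) ∈ Set.Ioo (3/8 : ℝ) (5/8) :=
    hyz (Ioo_mem_nhds (by norm_num) (by norm_num))
  have h3 : ∀ᶠ k in atTop, (8*(C+1)+1 : ℝ) ≤ dist (x k) (y k) := hxy.eventually_ge_atTop _
  have h4 : ∀ᶠ k in atTop, (1 : ℝ) ≤ dist (x k) (y k) := hxy.eventually_ge_atTop _
  obtain ⟨k, hk1, hk2, hk3, hk4⟩ := (h1.and (h2.and (h3.and h4))).exists
  set R := dist (x k) (y k) with hR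
  have hRpos : (0:ℝ) < R := lt_of_lt_of_le one_pos hk4
  have hxz1 : 3/8 * R < dist (x k) (z k) := by
    have := hk1.1
    rw [lt_div_iff₀ hRpos] at this
    linarith
  have hxz2 : dist (x k) (z k) < 5/8 * R := by
    have := hk1.2
    rw [div_lt_iff₀ hRpos] at this
    linarith
  have hyz1 : 3/8 * R < dist (y k) (z k) := by
    have := hk2.1
    rw [lt_div_iff₀ hRpos] at this
    linarith
  have hyz2 : dist (y k) (z k) < 5/8 * R := by
    have := hk2.2
    rw [div_lt_iff₀ hRpos] at this
    linarith
  obtain ⟨u, v, huv⟩ := hub₂ R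
  have key := hC (x k, u) (y k, u) (z k, v) (z k, u)
  have e1 : dist ((x k, u) : X₁ × X₂) (z k, u) = dist (x k) (z k) := by
    rw [Prod.dist_eq, dist_self]
    exact max_eq_left dist_nonneg
  have e2 : dist ((z k, u) : X₁ × X₂) (z k, v) = dist u v := by
    rw [Prod.dist_eq, dist_self]
    exact max_eq_right dist_nonneg
  have e3 : dist ((x k, u) : X₁ × X₂) (z k, v) = dist u v := by
    rw [Prod.dist_eq]
    exact max_eq_right (by linarith)
  have e4 : dist ((z k, v) : X₁ × X₂) (z k, u) = dist u v := by
    rw [dist_comm]; exact e2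
  have e5 : dist ((z k, u) : X₁ × X₂) (y k, u) = dist (y k) (z k) := by
    rw [Prod.dist_eq, dist_self, dist_comm (z k) (y k)]
    exact max_eq_left dist_nonneg
  have e6 : dist ((z k, v) : X₁ × X₂) (y k, u) = dist u v := by
    rw [Prod.dist_eq, dist_comm (z k) (y k), dist_comm v u]
    exact max_eq_right (by linarith)
  have e7 : dist ((x k, u) : X₁ × X₂) (y k, u) = R := by
    rw [Prod.dist_eq, dist_self]
    exact max_eq_left dist_nonneg
  rw [e1, e2, e3, e4, e5, e6, e7] at key
  have hmin : (3/8 : ℝ) * R < min (dist (x k) (z k) + dist u v - dist u v)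
      (dist u v + dist (y k) (z k) - dist u v) := by
    apply lt_min <;> linarith
  linarith [hmin, key, hk3]
end

section
/- Let D₁ ⊆ ℂⁿ and D₂ ⊆ ℂᵐ be domains that are Kobayashi hyperbolic (i.e. k_{D₁} and k_{D₂} are distances) and each of which admits a non-constant bounded holomorphic function. Then the product domain D₁ × D₂ ⊆ ℂ^{n+m} is not Gromov hyperbolic with respect to its Kobayashi distance k_{D₁ × D₂}. -/
open Metric Set

noncomputable section

/-- Inverse hyperbolic tangent: `artanh t = (1/2) * log ((1+t)/(1-t))`. -/
def artanh (x : ℝ) : ℝ := Real.log ((1 + x) / (1 - x)) / 2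

variable {E : Type*} [NormedAddCommGroup E] [NormedSpace ℂ E]

/-- The Lempert function of a set `D ⊆ E`:
`l_D(z,w) = inf { artanh |α| : ∃ φ : 𝔻 → D holomorphic, φ 0 = z, φ α = w }`. -/
def lempert (D : Set E) (z w : E) : ℝ :=
  sInf { r : ℝ | ∃ α : ℂ, ‖α‖ < 1 ∧
    (∃ φ : ℂ → E, DifferentiableOn ℂ φ (ball 0 1) ∧ MapsTo φ (ball 0 1) D ∧
      φ 0 = z ∧ φ α = w) ∧ r = artanh ‖α‖ }

/-- The Kobayashi pseudodistance: infimum of `∑ l_D(z_{i-1}, z_i)` over all finite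
chains of points `z = c 0, c 1, …, c m = w` in `D`. -/
def kobayashi (D : Set E) (z w : E) : ℝ :=
  sInf { r : ℝ | ∃ (m : ℕ) (c : ℕ → E), c 0 = z ∧ c m = w ∧ (∀ i ≤ m, c i ∈ D) ∧
    r = ∑ i ∈ Finset.range m, lempert D (c i) (c (i + 1)) }

/-- The Carathéodory pseudodistance:
`c_D(z,w) = sup { artanh |f w| : f : D → 𝔻 holomorphic, f z = 0 }`. -/
def caratheodory (D : Set E) (z w : E) : ℝ :=
  sSup { r : ℝ | ∃ f : E → ℂ, DifferentiableOn ℂ f D ∧ MapsTo f D (ball 0 1) ∧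
    f z = 0 ∧ r = artanh ‖f w‖ }

/-- `(D, d)` is Gromov hyperbolic if
`sup_{p,q,x,w ∈ D} ( min{(p,x)_w, (x,q)_w} − (p,q)_w ) < ∞`, where
`(x,y)_z = d x z + d z y - d x y` is the Gromov product. -/
def GromovHyperbolicWith (D : Set E) (d : E → E → ℝ) : Prop :=
  ∃ C : ℝ, ∀ p ∈ D, ∀ q ∈ D, ∀ x ∈ D, ∀ w ∈ D,
    min (d p w + d w x - d p x) (d x w + d w q - d x q) - (d p w + d w q - d p q) ≤ C

end

/-!
Write `k₁`, `k₂`, `k` for the Kobayashi distances of `D₁`, `D₂`, `D₁ × D₂`. The projections are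
holomorphic, so `k ≥ max (k₁ ∘ pr₁) (k₂ ∘ pr₂)`; conversely, subdividing the discs of two chains
of analytic discs of equal total length and pairing them gives `k ≤ max k₁ k₂ + ε`. Splitting a
chain in the middle gives almost-midpoints. Each `kᵢ` is unbounded: dividing a bounded
non-constant holomorphic function by its supremum, which is not attained, gives a map into the
unit disc with values arbitrarily close to the boundary, and by Schwarz–Pick `kᵢ` dominates the
Poincaré distance between values. An almost `ℓ^∞`-product of two unbounded spaces with
almost-midpoints contains arbitrarily fat quadrilaterals, hence is not Gromov hyperbolic.

Kobayashi hyperbolicity guarantees that any two points lie on a common analytic disc, so that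
`lempert` never takes the junk value `sInf ∅ = 0`.
-/

open ComplexConjugate

theorem artanh_eq_real_artanh {x : ℝ} (hx : x ∈ Icc (-1) 1) : artanh x = Real.artanh x := by
  rw [Real.artanh_eq_half_log hx, artanh]
  ring

theorem Real.artanh_add_artanh {a b : ℝ} (ha : a ∈ Ioo (-1) 1) (hb : b ∈ Ioo (-1) 1) :
    Real.artanh a + Real.artanh b = Real.artanh ((a + b) / (1 + a * b)) := by
  obtain ⟨ha₁, ha₂⟩ := ha
  obtain ⟨hb₁, hb₂⟩ := hb
  have hab : 0 < 1 + a * b := by nlinarith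
  have hq : (a + b) / (1 + a * b) ∈ Icc (-1) 1 := by
    constructor
    · rw [le_div_iff₀ hab]; nlinarith
    · rw [div_le_iff₀ hab]; nlinarith
  have key : (1 + (a + b) / (1 + a * b)) / (1 - (a + b) / (1 + a * b)) =
      (1 + a) / (1 - a) * ((1 + b) / (1 - b)) := by
    have h₁ : 1 + (a + b) / (1 + a * b) = (1 + a) * (1 + b) / (1 + a * b) := by
      field_simp; ring
    have h₂ : 1 - (a + b) / (1 + a * b) = (1 - a) * (1 - b) / (1 + a * b) := by
      field_simp; ring
    rw [h₁, h₂, div_div_div_cancel_right₀ hab.ne', div_mul_div_comm]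
  rw [Real.artanh_eq_half_log ⟨ha₁.le, ha₂.le⟩, Real.artanh_eq_half_log ⟨hb₁.le, hb₂.le⟩,
    Real.artanh_eq_half_log hq, key, Real.log_mul (div_pos (by linarith) (by linarith)).ne'
      (div_pos (by linarith) (by linarith)).ne']
  ring

theorem Real.artanh_sub_artanh {a b : ℝ} (ha : a ∈ Ioo (-1) 1) (hb : b ∈ Ioo (-1) 1) :
    Real.artanh a - Real.artanh b = Real.artanh ((a - b) / (1 - a * b)) := by
  obtain ⟨ha₁, ha₂⟩ := ha
  obtain ⟨hb₁, hb₂⟩ := hb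
  have hab : 0 < 1 - a * b := by nlinarith
  have hq : (a - b) / (1 - a * b) ∈ Ioo (-1) 1 := by
    constructor
    · rw [lt_div_iff₀ hab]; nlinarith
    · rw [div_lt_iff₀ hab]; nlinarith
  have key : ((a - b) / (1 - a * b) + b) / (1 + (a - b) / (1 - a * b) * b) = a := by
    have h₁ : (a - b) / (1 - a * b) + b = a * (1 - b * b) / (1 - a * b) := by
      field_simp; ring
    have h₂ : 1 + (a - b) / (1 - a * b) * b = (1 - b * b) / (1 - a * b) := by
      field_simp; ring
    have : 1 - b * b ≠ 0 := by nlinarith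
    rw [h₁, h₂, div_div_div_cancel_right₀ hab.ne', mul_div_cancel_right₀ _ this]
  rw [sub_eq_iff_eq_add, Real.artanh_add_artanh hq ⟨hb₁, hb₂⟩, key]

noncomputable def mobius (c z : ℂ) : ℂ := (c - z) / (1 - conj c * z)

noncomputable def poincareDist (a b : ℂ) : ℝ := Real.artanh ‖mobius a b‖

theorem one_sub_conj_mul_ne_zero {a b : ℂ} (ha : ‖a‖ < 1) (hb : ‖b‖ ≤ 1) :
    1 - conj a * b ≠ 0 := by
  rw [sub_ne_zero]
  refine fun h => (?_ : ‖conj a * b‖ < 1).ne (by rw [← h, norm_one])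
  rw [norm_mul, RCLike.norm_conj]
  nlinarith [norm_nonneg a, norm_nonneg b]

theorem sq_norm_sub_eq (a b : ℂ) : ‖a - b‖ ^ 2 = ‖a‖ ^ 2 + ‖b‖ ^ 2 - 2 * (a * conj b).re := by
  simp only [Complex.sq_norm, Complex.normSq_sub]

theorem sq_norm_one_sub_conj_mul (a b : ℂ) :
    ‖1 - conj a * b‖ ^ 2 = 1 + ‖a‖ ^ 2 * ‖b‖ ^ 2 - 2 * (a * conj b).re := by
  rw [sq_norm_sub_eq, norm_one, norm_mul, RCLike.norm_conj, one_mul, map_mul, Complex.conj_conj]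
  ring

theorem norm_mobius_lt_one {a b : ℂ} (ha : ‖a‖ < 1) (hb : ‖b‖ < 1) : ‖mobius a b‖ < 1 := by
  have hN := one_sub_conj_mul_ne_zero ha hb.le
  rw [mobius, norm_div, div_lt_one (norm_pos_iff.2 hN)]
  refine pow_lt_pow_iff_left₀ (norm_nonneg _) (norm_nonneg _) two_ne_zero |>.1 ?_
  rw [sq_norm_sub_eq, sq_norm_one_sub_conj_mul]
  nlinarith [mul_pos (by nlinarith [norm_nonneg a] : 0 < 1 - ‖a‖ ^ 2)
    (by nlinarith [norm_nonneg b] : 0 < 1 - ‖b‖ ^ 2)]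

theorem mobius_zero (c : ℂ) : mobius c 0 = c := by simp [mobius]

theorem mobius_self (c : ℂ) : mobius c c = 0 := by simp [mobius]

theorem zero_mobius (z : ℂ) : mobius 0 z = -z := by simp [mobius]

theorem mobius_mobius {c z : ℂ} (hc : ‖c‖ < 1) (hz : ‖z‖ < 1) : mobius c (mobius c z) = z := by
  have h₁ := one_sub_conj_mul_ne_zero hc hz.le
  have h₂ := one_sub_conj_mul_ne_zero hc hc.le
  have hnum : c - (c - z) / (1 - conj c * z) = z * (1 - conj c * c) / (1 - conj c * z) := by
    rw [eq_div_iff h₁, sub_mul, div_mul_cancel₀ _ h₁]; ring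
  have hden : 1 - conj c * ((c - z) / (1 - conj c * z)) = (1 - conj c * c) / (1 - conj c * z) := by
    field_simp; ring
  rw [mobius, mobius, hnum, hden, div_div_div_cancel_right₀ h₁, mul_div_cancel_right₀ _ h₂]

theorem norm_mobius_comm (a b : ℂ) : ‖mobius a b‖ = ‖mobius b a‖ := by
  rw [mobius, mobius, norm_div, norm_div, norm_sub_rev, ← RCLike.norm_conj (1 - conj a * b)]
  simp [mul_comm]

theorem differentiableOn_mobius {c : ℂ} (hc : ‖c‖ < 1) :
    DifferentiableOn ℂ (mobius c) (ball 0 1) :=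
  (differentiableOn_const c |>.sub differentiableOn_id).div
    (differentiableOn_const 1 |>.sub (differentiableOn_const _ |>.mul differentiableOn_id))
    fun _ hz => one_sub_conj_mul_ne_zero hc (mem_ball_zero_iff.1 hz).le

theorem mapsTo_mobius {c : ℂ} (hc : ‖c‖ < 1) : MapsTo (mobius c) (ball 0 1) (ball 0 1) :=
  fun _ hz => mem_ball_zero_iff.2 (norm_mobius_lt_one hc (mem_ball_zero_iff.1 hz))

/-- Schwarz–Pick lemma. -/
theorem norm_mobius_le_of_mapsTo_ball {h : ℂ → ℂ} (hd : DifferentiableOn ℂ h (ball 0 1))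
    (hm : MapsTo h (ball 0 1) (ball 0 1)) {a b : ℂ} (ha : ‖a‖ < 1) (hb : ‖b‖ < 1) :
    ‖mobius (h a) (h b)‖ ≤ ‖mobius a b‖ := by
  have hha : ‖h a‖ < 1 := mem_ball_zero_iff.1 (hm (mem_ball_zero_iff.2 ha))
  -- `H` is a self-map of the disc fixing `0` and sending `mobius a b` to `mobius (h a) (h b)`.
  set H : ℂ → ℂ := mobius (h a) ∘ h ∘ mobius a
  have hHd : DifferentiableOn ℂ H (ball 0 1) :=
    (differentiableOn_mobius hha).comp (hd.comp (differentiableOn_mobius ha) (mapsTo_mobius ha))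
      (hm.comp (mapsTo_mobius ha))
  have hHm : MapsTo H (ball 0 1) (ball 0 1) := (mapsTo_mobius hha).comp (hm.comp (mapsTo_mobius ha))
  have hH0 : H 0 = 0 := by simp [H, mobius_zero, mobius_self]
  have := Complex.norm_le_norm_of_mapsTo_ball hHd (hHm.mono_right ball_subset_closedBall) hH0
    (norm_mobius_lt_one ha hb)
  simpa [H, mobius_mobius ha hb] using this

theorem norm_mobius_mobius {c a b : ℂ} (hc : ‖c‖ < 1) (ha : ‖a‖ < 1) (hb : ‖b‖ < 1) :
    ‖mobius (mobius c a) (mobius c b)‖ = ‖mobius a b‖ := by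
  refine le_antisymm
    (norm_mobius_le_of_mapsTo_ball (differentiableOn_mobius hc) (mapsTo_mobius hc) ha hb) ?_
  have := norm_mobius_le_of_mapsTo_ball (differentiableOn_mobius hc) (mapsTo_mobius hc)
    (norm_mobius_lt_one hc ha) (norm_mobius_lt_one hc hb)
  rwa [mobius_mobius hc ha, mobius_mobius hc hb] at this

theorem norm_mobius_le {a b : ℂ} (ha : ‖a‖ < 1) (hb : ‖b‖ < 1) :
    ‖mobius a b‖ ≤ (‖a‖ + ‖b‖) / (1 + ‖a‖ * ‖b‖) := by
  have hN : 0 < ‖1 - conj a * b‖ := norm_pos_iff.2 (one_sub_conj_mul_ne_zero ha hb.le)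
  have hx : -(‖a‖ * ‖b‖) ≤ (a * conj b).re := by
    have := Complex.abs_re_le_norm (a * conj b)
    rw [norm_mul, RCLike.norm_conj] at this
    linarith [neg_abs_le (a * conj b).re]
  rw [mobius, norm_div, div_le_div_iff₀ hN (by positivity)]
  refine pow_le_pow_iff_left₀ (by positivity) (by positivity) two_ne_zero |>.1 ?_
  rw [mul_pow, mul_pow, sq_norm_sub_eq, sq_norm_one_sub_conj_mul]
  have h₁ : 0 ≤ 1 - ‖a‖ ^ 2 := by nlinarith [norm_nonneg a]
  have h₂ : 0 ≤ 1 - ‖b‖ ^ 2 := by nlinarith [norm_nonneg b]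
  nlinarith [mul_nonneg (mul_nonneg h₁ h₂) (neg_le_iff_add_nonneg.1 hx)]

theorem poincareDist_comm (a b : ℂ) : poincareDist a b = poincareDist b a := by
  rw [poincareDist, poincareDist, norm_mobius_comm]

theorem poincareDist_zero_left (b : ℂ) : poincareDist 0 b = Real.artanh ‖b‖ := by
  rw [poincareDist, zero_mobius, norm_neg]

theorem poincareDist_triangle {a b c : ℂ} (ha : ‖a‖ < 1) (hb : ‖b‖ < 1) (hc : ‖c‖ < 1) :
    poincareDist a c ≤ poincareDist a b + poincareDist b c := by
  have hab := norm_mobius_lt_one hb ha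
  have hbc := norm_mobius_lt_one hb hc
  have hmem : ∀ {x : ℝ}, 0 ≤ x → x < 1 → x ∈ Ioo (-1) 1 := fun h0 h1 => ⟨by linarith, h1⟩
  rw [poincareDist, poincareDist, poincareDist, norm_mobius_comm a b,
    Real.artanh_add_artanh (hmem (norm_nonneg _) hab) (hmem (norm_nonneg _) hbc),
    ← norm_mobius_mobius hb ha hc]
  refine Real.artanh_le_artanh (by linarith [norm_nonneg (mobius (mobius b a) (mobius b c))]) ?_
    (norm_mobius_le hab hbc)
  rw [div_lt_one (by positivity)]
  nlinarith [norm_nonneg (mobius b a), norm_nonneg (mobius b c)]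

theorem poincareDist_ofReal_mul_self {t : ℝ} (ht₀ : 0 ≤ t) (ht₁ : t ≤ 1) {α : ℂ} (hα : ‖α‖ < 1) :
    poincareDist (t * α) α = Real.artanh ‖α‖ - Real.artanh (t * ‖α‖) := by
  have ha₀ : 0 ≤ ‖α‖ := norm_nonneg α
  have hta : t * ‖α‖ ≤ ‖α‖ := mul_le_of_le_one_left ha₀ ht₁
  have hden : 0 < 1 - ‖α‖ * (t * ‖α‖) := by nlinarith
  have hnum : (t * α : ℂ) - α = ((t - 1 : ℝ) : ℂ) * α := by push_cast; ring
  have hconj : 1 - conj (t * α : ℂ) * α = ((1 - ‖α‖ * (t * ‖α‖) : ℝ) : ℂ) := by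
    rw [map_mul, Complex.conj_ofReal, mul_assoc, Complex.conj_mul']
    push_cast
    ring
  rw [Real.artanh_sub_artanh ⟨by linarith, hα⟩ ⟨by nlinarith, by linarith⟩, poincareDist, mobius,
    norm_div, hnum, hconj, norm_mul, Complex.norm_real, Complex.norm_real, Real.norm_eq_abs,
    Real.norm_eq_abs, abs_of_nonpos (by linarith), abs_of_pos hden]
  ring_nf

variable {E F : Type*} [NormedAddCommGroup E] [NormedSpace ℂ E] [NormedAddCommGroup F]
  [NormedSpace ℂ F]

def IsAnalyticDisc (D : Set E) (φ : ℂ → E) : Prop :=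
  DifferentiableOn ℂ φ (ball 0 1) ∧ MapsTo φ (ball 0 1) D

namespace IsAnalyticDisc

variable {D : Set E} {φ : ℂ → E}

theorem mem (hφ : IsAnalyticDisc D φ) {ζ : ℂ} (hζ : ‖ζ‖ < 1) : φ ζ ∈ D :=
  hφ.2 (mem_ball_zero_iff.2 hζ)

theorem const {z : E} (hz : z ∈ D) : IsAnalyticDisc D fun _ => z :=
  ⟨differentiableOn_const z, fun _ _ => hz⟩

theorem comp_mobius (hφ : IsAnalyticDisc D φ) {c : ℂ} (hc : ‖c‖ < 1) :
    IsAnalyticDisc D (φ ∘ mobius c) :=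
  ⟨hφ.1.comp (differentiableOn_mobius hc) (mapsTo_mobius hc), hφ.2.comp (mapsTo_mobius hc)⟩

theorem comp_mul (hφ : IsAnalyticDisc D φ) {c : ℂ} (hc : ‖c‖ ≤ 1) :
    IsAnalyticDisc D fun ζ => φ (c * ζ) := by
  have hmaps : MapsTo (c * ·) (ball (0 : ℂ) 1) (ball 0 1) := fun ζ hζ => by
    rw [mem_ball_zero_iff] at hζ ⊢
    rw [norm_mul]
    nlinarith [norm_nonneg c, norm_nonneg ζ]
  exact ⟨hφ.1.comp (differentiableOn_id.const_mul c) hmaps, hφ.2.comp hmaps⟩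

theorem prodMk (hφ : IsAnalyticDisc D φ) {D' : Set F} {ψ : ℂ → F} (hψ : IsAnalyticDisc D' ψ) :
    IsAnalyticDisc (D ×ˢ D') fun ζ => (φ ζ, ψ ζ) :=
  ⟨hφ.1.prodMk hψ.1, fun _ hζ => ⟨hφ.2 hζ, hψ.2 hζ⟩⟩

theorem map (hφ : IsAnalyticDisc D φ) {D' : Set F} {f : E → F} (hf : DifferentiableOn ℂ f D)
    (hfD : MapsTo f D D') : IsAnalyticDisc D' (f ∘ φ) :=
  ⟨hf.comp hφ.1 hφ.2, hfD.comp hφ.2⟩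

end IsAnalyticDisc

/-- The cost `r` is only an upper bound for `artanh ‖α‖`; this leaves the infimum
`lempert D z w` unchanged. -/
def JoinedByDisc (D : Set E) (z w : E) (r : ℝ) : Prop :=
  ∃ φ : ℂ → E, IsAnalyticDisc D φ ∧ ∃ α : ℂ, ‖α‖ < 1 ∧ φ 0 = z ∧ φ α = w ∧ Real.artanh ‖α‖ ≤ r

def IsDiscConnected (D : Set E) : Prop :=
  ∀ z ∈ D, ∀ w ∈ D, ∃ r, JoinedByDisc D z w r

theorem exists_mul_eq_of_norm_le {a b : ℂ} (h : ‖a‖ ≤ ‖b‖) : ∃ c : ℂ, ‖c‖ ≤ 1 ∧ c * b = a := by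
  rcases eq_or_ne b 0 with rfl | hb
  · exact ⟨0, by simp, by simpa [eq_comm] using h⟩
  · exact ⟨a / b, by rw [norm_div]; exact div_le_one_of_le₀ h (norm_nonneg b),
      div_mul_cancel₀ a hb⟩

namespace JoinedByDisc

variable {D : Set E} {z w : E} {r : ℝ}

theorem nonneg (h : JoinedByDisc D z w r) : 0 ≤ r := by
  obtain ⟨-, -, α, -, -, -, hr⟩ := h
  exact (Real.artanh_nonneg (norm_nonneg α)).trans hr

theorem mem_left (h : JoinedByDisc D z w r) : z ∈ D := by
  obtain ⟨φ, hφ, -, -, rfl, -⟩ := h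
  exact hφ.mem (by simp)

theorem mem_right (h : JoinedByDisc D z w r) : w ∈ D := by
  obtain ⟨φ, hφ, α, hα, -, rfl, -⟩ := h
  exact hφ.mem hα

theorem refl (hz : z ∈ D) (hr : 0 ≤ r) : JoinedByDisc D z z r :=
  ⟨_, .const hz, 0, by simp, rfl, rfl, by simpa using hr⟩

theorem mono (h : JoinedByDisc D z w r) {s : ℝ} (hrs : r ≤ s) : JoinedByDisc D z w s := by
  obtain ⟨φ, hφ, α, hα, h0, hα', hr⟩ := h
  exact ⟨φ, hφ, α, hα, h0, hα', hr.trans hrs⟩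

theorem of_isAnalyticDisc {φ : ℂ → E} (hφ : IsAnalyticDisc D φ) {a b : ℂ} (ha : ‖a‖ < 1)
    (hb : ‖b‖ < 1) : JoinedByDisc D (φ a) (φ b) (poincareDist a b) :=
  ⟨_, hφ.comp_mobius ha, mobius a b, norm_mobius_lt_one ha hb,
    by simp [mobius_zero], by simp [mobius_mobius ha hb], le_rfl⟩

theorem symm (h : JoinedByDisc D z w r) : JoinedByDisc D w z r := by
  obtain ⟨φ, hφ, α, hα, rfl, rfl, hr⟩ := h
  refine (of_isAnalyticDisc hφ hα (by simp)).mono ?_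
  rwa [poincareDist_comm, poincareDist_zero_left]

theorem map {D' : Set F} {f : E → F} (hf : DifferentiableOn ℂ f D) (hfD : MapsTo f D D')
    (h : JoinedByDisc D z w r) : JoinedByDisc D' (f z) (f w) r := by
  obtain ⟨φ, hφ, α, hα, rfl, rfl, hr⟩ := h
  exact ⟨f ∘ φ, hφ.map hf hfD, α, hα, rfl, rfl, hr⟩

theorem prod {D' : Set F} {z' w' : F} {s : ℝ} (h : JoinedByDisc D z w r)
    (h' : JoinedByDisc D' z' w' s) : JoinedByDisc (D ×ˢ D') (z, z') (w, w') (max r s) := by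
  obtain ⟨φ, hφ, α, hα, rfl, rfl, hr⟩ := h
  obtain ⟨ψ, hψ, β, hβ, rfl, rfl, hs⟩ := h'
  rcases le_total ‖α‖ ‖β‖ with hαβ | hβα
  · obtain ⟨c, hc, rfl⟩ := exists_mul_eq_of_norm_le hαβ
    exact ⟨_, (hφ.comp_mul hc).prodMk hψ, β, hβ, by simp, rfl, le_max_of_le_right hs⟩
  · obtain ⟨c, hc, rfl⟩ := exists_mul_eq_of_norm_le hβα
    exact ⟨_, hφ.prodMk (hψ.comp_mul hc), α, hα, by simp, rfl, le_max_of_le_left hr⟩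

theorem exists_split (h : JoinedByDisc D z w r) {s : ℝ} (hs₀ : 0 ≤ s) (hsr : s ≤ r) :
    ∃ u, JoinedByDisc D z u s ∧ JoinedByDisc D u w (r - s) := by
  obtain ⟨φ, hφ, α, hα, rfl, rfl, hr⟩ := h
  rcases le_or_gt (Real.artanh ‖α‖) s with hαs | hsα
  · exact ⟨φ α, ⟨φ, hφ, α, hα, rfl, rfl, hαs⟩, refl (hφ.mem hα) (by linarith)⟩
  -- cut the disc at the point `β` of the segment `[0, α]` at Poincaré distance `s` from `0`
  have hα₀ : 0 < ‖α‖ := by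
    by_contra! h
    rw [norm_le_zero_iff.1 h, norm_zero, Real.artanh_zero] at hsα
    linarith
  have htanh : Real.tanh s < ‖α‖ :=
    (Real.artanh_lt_artanh_iff ⟨Real.neg_one_lt_tanh s, Real.tanh_lt_one s⟩
      ⟨by linarith, hα⟩).1 (by rwa [Real.artanh_tanh])
  have htanh₀ : 0 ≤ Real.tanh s := not_lt.1 fun h =>
    (Real.artanh_neg ⟨Real.neg_one_lt_tanh s, h⟩).not_ge (by rwa [Real.artanh_tanh])
  set t := Real.tanh s / ‖α‖
  have ht : t * ‖α‖ = Real.tanh s := div_mul_cancel₀ _ hα₀.ne'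
  have ht₀ : 0 ≤ t := div_nonneg htanh₀ hα₀.le
  have ht₁ : t ≤ 1 := (div_le_one hα₀).2 htanh.le
  have hβ : ‖(t * α : ℂ)‖ = Real.tanh s := by
    rw [norm_mul, Complex.norm_real, Real.norm_of_nonneg ht₀, ht]
  refine ⟨φ (t * α), ⟨φ, hφ, t * α, by rw [hβ]; exact Real.tanh_lt_one s, rfl, rfl,
    by rw [hβ, Real.artanh_tanh]⟩, (of_isAnalyticDisc hφ (by rw [hβ]; exact Real.tanh_lt_one s)
    hα).mono ?_⟩
  rw [poincareDist_ofReal_mul_self ht₀ ht₁ hα, ht, Real.artanh_tanh]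
  linarith

theorem poincareDist_le {a b : ℂ} (h : JoinedByDisc (ball 0 1) a b r) : poincareDist a b ≤ r := by
  obtain ⟨φ, hφ, α, hα, rfl, rfl, hr⟩ := h
  refine le_trans ?_ (poincareDist_zero_left α ▸ hr)
  exact Real.artanh_le_artanh (by linarith [norm_nonneg (mobius (φ 0) (φ α))])
    (norm_mobius_lt_one (by simp) hα)
    (norm_mobius_le_of_mapsTo_ball hφ.1 hφ.2 (by simp) hα)

end JoinedByDisc

inductive JoinedByDiscChain (D : Set E) : E → E → ℝ → Prop
  | refl {z : E} : z ∈ D → JoinedByDiscChain D z z 0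
  | cons {z x w : E} {r S : ℝ} :
      JoinedByDisc D z x r → JoinedByDiscChain D x w S → JoinedByDiscChain D z w (r + S)

namespace JoinedByDiscChain

variable {D : Set E} {z w : E} {S : ℝ}

theorem single {r : ℝ} (h : JoinedByDisc D z w r) : JoinedByDiscChain D z w r := by
  simpa using cons h (.refl h.mem_right)

theorem nonneg (h : JoinedByDiscChain D z w S) : 0 ≤ S := by
  induction h with
  | refl => exact le_rfl
  | cons hd _ ih => exact add_nonneg hd.nonneg ih

theorem mem_right (h : JoinedByDiscChain D z w S) : w ∈ D := by
  induction h with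
  | refl hz => exact hz
  | cons _ _ ih => exact ih

theorem trans {x : E} {T : ℝ} (h₁ : JoinedByDiscChain D z x S) (h₂ : JoinedByDiscChain D x w T) :
    JoinedByDiscChain D z w (S + T) := by
  induction h₁ with
  | refl => simpa using h₂
  | cons hd _ ih => simpa [add_assoc] using cons hd (ih h₂)

theorem mono (h : JoinedByDiscChain D z w S) {T : ℝ} (hST : S ≤ T) :
    JoinedByDiscChain D z w T := by
  simpa using h.trans (single (.refl h.mem_right (sub_nonneg.2 hST)))

theorem symm (h : JoinedByDiscChain D z w S) : JoinedByDiscChain D w z S := by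
  induction h with
  | refl hz => exact .refl hz
  | cons hd _ ih => simpa [add_comm] using ih.trans (single hd.symm)

theorem map {D' : Set F} {f : E → F} (hf : DifferentiableOn ℂ f D) (hfD : MapsTo f D D')
    (h : JoinedByDiscChain D z w S) : JoinedByDiscChain D' (f z) (f w) S := by
  induction h with
  | refl hz => exact .refl (hfD hz)
  | cons hd _ ih => exact cons (hd.map hf hfD) ih

theorem exists_split (h : JoinedByDiscChain D z w S) {t : ℝ} (ht₀ : 0 ≤ t) (htS : t ≤ S) :
    ∃ u, JoinedByDiscChain D z u t ∧ JoinedByDiscChain D u w (S - t) := by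
  induction h generalizing t with
  | refl hz =>
    obtain rfl : t = 0 := le_antisymm htS ht₀
    exact ⟨_, .refl hz, by simpa using .refl hz⟩
  | @cons z x w r T hd hc ih =>
    rcases le_total t r with htr | hrt
    · obtain ⟨u, h₁, h₂⟩ := hd.exists_split ht₀ htr
      exact ⟨u, single h₁, by convert cons h₂ hc using 1; ring⟩
    · obtain ⟨u, h₁, h₂⟩ := ih (sub_nonneg.2 hrt) (by linarith)
      exact ⟨u, by convert cons hd h₁ using 1; ring, by convert h₂ using 1; ring⟩

theorem _root_.JoinedByDisc.prod_joinedByDiscChain {D' : Set F} {a a' : E} {b b' : F}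
    (h : JoinedByDisc D a a' S) (h' : JoinedByDiscChain D' b b' S) :
    JoinedByDiscChain (D ×ˢ D') (a, b) (a', b') S := by
  induction h' generalizing a with
  | refl hb => exact single (by simpa using h.prod (.refl hb le_rfl))
  | @cons b x b' r T hd hc ih =>
    obtain ⟨y, h₁, h₂⟩ := h.exists_split hd.nonneg (le_add_of_nonneg_right hc.nonneg)
    exact cons (by simpa using h₁.prod hd) (ih (by simpa using h₂))

theorem prod {D' : Set F} {a a' : E} {b b' : F} (h : JoinedByDiscChain D a a' S)
    (h' : JoinedByDiscChain D' b b' S) : JoinedByDiscChain (D ×ˢ D') (a, b) (a', b') S := by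
  induction h generalizing b with
  | refl ha => exact (JoinedByDisc.refl ha le_rfl).prod_joinedByDiscChain h'
  | @cons a x a' r T hd hc ih =>
    obtain ⟨u, h₁, h₂⟩ := h'.exists_split hd.nonneg (le_add_of_nonneg_right hc.nonneg)
    exact (hd.prod_joinedByDiscChain h₁).trans (ih (by simpa using h₂))

theorem poincareDist_le {a b : ℂ} (h : JoinedByDiscChain (ball 0 1) a b S) :
    poincareDist a b ≤ S := by
  induction h with
  | refl => simp [poincareDist, mobius_self]
  | @cons a x b r T hd hc ih =>
    have hx := mem_ball_zero_iff.1 hd.mem_right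
    calc poincareDist a b ≤ poincareDist a x + poincareDist x b :=
          poincareDist_triangle (mem_ball_zero_iff.1 hd.mem_left) hx
            (mem_ball_zero_iff.1 hc.mem_right)
      _ ≤ r + T := add_le_add hd.poincareDist_le ih

end JoinedByDiscChain

section Kobayashi

variable {D : Set E} {z w : E}

theorem artanh_norm_eq {α : ℂ} (hα : ‖α‖ < 1) : artanh ‖α‖ = Real.artanh ‖α‖ :=
  artanh_eq_real_artanh ⟨by linarith [norm_nonneg α], hα.le⟩

theorem lempert_eq (D : Set E) (z w : E) :
    lempert D z w = sInf {r | ∃ α : ℂ, ‖α‖ < 1 ∧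
      (∃ φ : ℂ → E, IsAnalyticDisc D φ ∧ φ 0 = z ∧ φ α = w) ∧ r = Real.artanh ‖α‖} := by
  unfold lempert
  congr 1
  ext r
  refine exists_congr fun α => and_congr_right fun hα => ?_
  simp only [artanh_norm_eq hα, IsAnalyticDisc, and_assoc]

theorem lempert_nonneg (D : Set E) (z w : E) : 0 ≤ lempert D z w := by
  rw [lempert_eq]
  refine Real.sInf_nonneg ?_
  rintro _ ⟨α, -, -, rfl⟩
  exact Real.artanh_nonneg (norm_nonneg α)

theorem lempert_le {r : ℝ} (h : JoinedByDisc D z w r) : lempert D z w ≤ r := by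
  obtain ⟨φ, hφ, α, hα, h0, hα', hr⟩ := h
  rw [lempert_eq]
  refine le_trans (csInf_le ⟨0, ?_⟩ ⟨α, hα, ⟨φ, hφ, h0, hα'⟩, rfl⟩) hr
  rintro _ ⟨β, -, -, rfl⟩
  exact Real.artanh_nonneg (norm_nonneg β)

theorem exists_joinedByDisc_lt_lempert_add (h : ∃ r, JoinedByDisc D z w r) {ε : ℝ}
    (hε : 0 < ε) : ∃ r, JoinedByDisc D z w r ∧ r < lempert D z w + ε := by
  obtain ⟨r, φ, hφ, α, hα, h0, hα', -⟩ := h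
  by_contra! hcon
  have : lempert D z w + ε ≤ lempert D z w := by
    conv_rhs => rw [lempert_eq]
    refine le_csInf ⟨_, α, hα, ⟨φ, hφ, h0, hα'⟩, rfl⟩ ?_
    rintro _ ⟨β, hβ, ⟨ψ, hψ, hψ0, hψβ⟩, rfl⟩
    exact hcon _ ⟨ψ, hψ, β, hβ, hψ0, hψβ, le_rfl⟩
  linarith

theorem kobayashi_le_sum {m : ℕ} {c : ℕ → E} (h0 : c 0 = z) (hm : c m = w)
    (hmem : ∀ i ≤ m, c i ∈ D) :
    kobayashi D z w ≤ ∑ i ∈ Finset.range m, lempert D (c i) (c (i + 1)) := by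
  refine csInf_le ⟨0, ?_⟩ ⟨m, c, h0, hm, hmem, rfl⟩
  rintro _ ⟨_, _, -, -, -, rfl⟩
  exact Finset.sum_nonneg fun _ _ => lempert_nonneg D _ _

theorem isDiscConnected_of_kobayashi_pos (h : ∀ z ∈ D, ∀ w ∈ D, z ≠ w → 0 < kobayashi D z w) :
    IsDiscConnected D := by
  intro z hz w hw
  by_contra! hno
  have hz_ne_w : z ≠ w := by
    rintro rfl
    exact hno 0 (.refl hz le_rfl)
  have hlempert : lempert D z w = 0 := by
    rw [lempert_eq, ← Real.sInf_empty]
    congr 1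
    refine Set.eq_empty_of_forall_notMem ?_
    rintro _ ⟨α, hα, ⟨φ, hφ, h0, hα'⟩, rfl⟩
    exact hno _ ⟨φ, hφ, α, hα, h0, hα', le_rfl⟩
  have := kobayashi_le_sum (D := D) (m := 1) (c := fun i => if i = 0 then z else w) rfl rfl
    fun i _ => by by_cases i = 0 <;> simp [*]
  exact (h z hz w hw hz_ne_w).not_ge (by simpa [hlempert] using this)

theorem JoinedByDiscChain.kobayashi_le {S : ℝ} (h : JoinedByDiscChain D z w S) :
    kobayashi D z w ≤ S := by
  suffices ∃ (m : ℕ) (c : ℕ → E), c 0 = z ∧ c m = w ∧ (∀ i ≤ m, c i ∈ D) ∧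
      ∑ i ∈ Finset.range m, lempert D (c i) (c (i + 1)) ≤ S by
    obtain ⟨m, c, h0, hm, hmem, hsum⟩ := this
    exact (kobayashi_le_sum h0 hm hmem).trans hsum
  induction h with
  | refl hz => exact ⟨0, fun _ => _, rfl, rfl, fun _ _ => hz, by simp⟩
  | @cons z x w r T hd _ ih =>
    obtain ⟨m, c, h0, hm, hmem, hsum⟩ := ih
    refine ⟨m + 1, fun i => if i = 0 then z else c (i - 1), by simp, by simp [hm], ?_, ?_⟩
    · rintro (_ | i) hi
      · simpa using hd.mem_left
      · simpa using hmem i (by omega)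
    · rw [Finset.sum_range_succ']
      simp only [add_eq_zero, one_ne_zero, and_false, if_false, if_true, add_tsub_cancel_right,
        h0]
      linarith [lempert_le hd]

theorem exists_joinedByDiscChain_lt_sum (hD : IsDiscConnected D) {m : ℕ} {c : ℕ → E}
    (hmem : ∀ i ≤ m, c i ∈ D) {ε : ℝ} (hε : 0 < ε) :
    ∃ S, JoinedByDiscChain D (c 0) (c m) S ∧
      S < ∑ i ∈ Finset.range m, lempert D (c i) (c (i + 1)) + ε := by
  induction m generalizing c ε with
  | zero => exact ⟨0, .refl (hmem 0 le_rfl), by simpa⟩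
  | succ m ih =>
    obtain ⟨S, hS, hSlt⟩ :=
      ih (c := fun i => c (i + 1)) (fun i hi => hmem _ (by omega)) (half_pos hε)
    obtain ⟨r, hr, hrlt⟩ := exists_joinedByDisc_lt_lempert_add
      (hD _ (hmem 0 (by omega)) _ (hmem 1 (by omega))) (half_pos hε)
    refine ⟨r + S, .cons hr hS, ?_⟩
    rw [Finset.sum_range_succ']
    linarith

theorem exists_joinedByDiscChain_lt_kobayashi_add (hD : IsDiscConnected D) (hz : z ∈ D)
    (hw : w ∈ D) {ε : ℝ} (hε : 0 < ε) :
    ∃ S, JoinedByDiscChain D z w S ∧ S < kobayashi D z w + ε := by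
  obtain ⟨r, hr⟩ := hD z hz w hw
  have hne : {r : ℝ | ∃ (m : ℕ) (c : ℕ → E), c 0 = z ∧ c m = w ∧ (∀ i ≤ m, c i ∈ D) ∧
      r = ∑ i ∈ Finset.range m, lempert D (c i) (c (i + 1))}.Nonempty :=
    ⟨_, 1, fun i => if i = 0 then z else w, rfl, rfl,
      fun i _ => by by_cases i = 0 <;> simp [*], rfl⟩
  obtain ⟨_, ⟨m, c, rfl, rfl, hmem, rfl⟩, hlt⟩ := Real.lt_sInf_add_pos hne (half_pos hε)
  obtain ⟨S, hS, hSlt⟩ := exists_joinedByDiscChain_lt_sum hD hmem (half_pos hε)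
  exact ⟨S, hS, by unfold kobayashi; linarith⟩

theorem IsDiscConnected.prod {D' : Set F} (hD : IsDiscConnected D) (hD' : IsDiscConnected D') :
    IsDiscConnected (D ×ˢ D') := fun p hp q hq =>
  let ⟨_, h⟩ := hD p.1 hp.1 q.1 hq.1
  let ⟨_, h'⟩ := hD' p.2 hp.2 q.2 hq.2
  ⟨_, h.prod h'⟩

theorem kobayashi_le_of_mapsTo {D' : Set F} {f : E → F} (hD : IsDiscConnected D)
    (hf : DifferentiableOn ℂ f D) (hfD : MapsTo f D D') (hz : z ∈ D) (hw : w ∈ D) :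
    kobayashi D' (f z) (f w) ≤ kobayashi D z w := by
  refine le_of_forall_pos_le_add fun ε hε => ?_
  obtain ⟨S, hS, hlt⟩ := exists_joinedByDiscChain_lt_kobayashi_add hD hz hw hε
  exact (hS.map hf hfD).kobayashi_le.trans hlt.le

theorem kobayashi_comm (hD : IsDiscConnected D) (hz : z ∈ D) (hw : w ∈ D) :
    kobayashi D z w = kobayashi D w z := by
  suffices ∀ {z w}, z ∈ D → w ∈ D → kobayashi D w z ≤ kobayashi D z w from
    le_antisymm (this hw hz) (this hz hw)
  intro z w hz hw
  refine le_of_forall_pos_le_add fun ε hε => ?_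
  obtain ⟨S, hS, hlt⟩ := exists_joinedByDiscChain_lt_kobayashi_add hD hz hw hε
  exact hS.symm.kobayashi_le.trans hlt.le

theorem kobayashi_prod_le {D' : Set F} (hD : IsDiscConnected D) (hD' : IsDiscConnected D')
    {a a' : E} {b b' : F} (ha : a ∈ D) (ha' : a' ∈ D) (hb : b ∈ D') (hb' : b' ∈ D')
    {ε : ℝ} (hε : 0 < ε) :
    kobayashi (D ×ˢ D') (a, b) (a', b') ≤ max (kobayashi D a a') (kobayashi D' b b') + ε := by
  obtain ⟨S, hS, hSlt⟩ := exists_joinedByDiscChain_lt_kobayashi_add hD ha ha' hε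
  obtain ⟨T, hT, hTlt⟩ := exists_joinedByDiscChain_lt_kobayashi_add hD' hb hb' hε
  calc kobayashi (D ×ˢ D') (a, b) (a', b') ≤ max S T :=
        ((hS.mono (le_max_left S T)).prod (hT.mono (le_max_right S T))).kobayashi_le
    _ ≤ max (kobayashi D a a') (kobayashi D' b b') + ε := by
        rw [← max_add_add_right]
        exact max_le_max hSlt.le hTlt.le

theorem exists_kobayashi_midpoint (hD : IsDiscConnected D) (hz : z ∈ D) (hw : w ∈ D) {ε : ℝ}
    (hε : 0 < ε) : ∃ u ∈ D, kobayashi D z u ≤ kobayashi D z w / 2 + ε ∧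
      kobayashi D u w ≤ kobayashi D z w / 2 + ε := by
  obtain ⟨S, hS, hlt⟩ :=
    exists_joinedByDiscChain_lt_kobayashi_add hD hz hw (by positivity : 0 < 2 * ε)
  obtain ⟨u, h₁, h₂⟩ := hS.exists_split (by linarith [hS.nonneg]) (half_le_self hS.nonneg)
  refine ⟨u, h₁.mem_right, ?_, ?_⟩
  · linarith [h₁.kobayashi_le]
  · linarith [h₂.kobayashi_le]

theorem poincareDist_le_kobayashi (hD : IsDiscConnected D) {g : E → ℂ}
    (hg : DifferentiableOn ℂ g D) (hgD : MapsTo g D (ball 0 1)) (hz : z ∈ D) (hw : w ∈ D) :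
    poincareDist (g z) (g w) ≤ kobayashi D z w := by
  refine le_of_forall_pos_le_add fun ε hε => ?_
  obtain ⟨S, hS, hlt⟩ := exists_joinedByDiscChain_lt_kobayashi_add hD hz hw hε
  exact (hS.map hg hgD).poincareDist_le.trans hlt.le

theorem exists_le_kobayashi (hD : IsDiscConnected D) {g : E → ℂ} (hg : DifferentiableOn ℂ g D)
    (hgD : MapsTo g D (ball 0 1)) (hz : z ∈ D) (hsup : ∀ t < 1, ∃ w ∈ D, t < ‖g w‖) (R : ℝ) :
    ∃ w ∈ D, R ≤ kobayashi D z w := by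
  have hball : ∀ {x}, x ∈ D → ‖g x‖ < 1 := fun hx => mem_ball_zero_iff.1 (hgD hx)
  obtain ⟨w, hw, hlt⟩ := hsup (Real.tanh (R + Real.artanh ‖g z‖)) (Real.tanh_lt_one _)
  refine ⟨w, hw, ?_⟩
  have hR : R + Real.artanh ‖g z‖ < Real.artanh ‖g w‖ := by
    rwa [← Real.artanh_lt_artanh_iff ⟨Real.neg_one_lt_tanh _, Real.tanh_lt_one _⟩
      ⟨by linarith [norm_nonneg (g w)], hball hw⟩, Real.artanh_tanh] at hlt
  have htri := poincareDist_triangle (a := 0) (by simp) (hball hz) (hball hw)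
  rw [poincareDist_zero_left, poincareDist_zero_left] at htri
  linarith [poincareDist_le_kobayashi hD hg hgD hz hw]

end Kobayashi

/-- Normalizing a bounded non-constant holomorphic function by its supremum, which by the maximum
modulus principle is not attained. -/
theorem exists_mapsTo_ball_forall_lt_norm {D : Set E} (hopen : IsOpen D) (hconn : IsConnected D)
    {f : E → ℂ} (hf : DifferentiableOn ℂ f D) (hbdd : ∃ C : ℝ, ∀ z ∈ D, ‖f z‖ ≤ C)
    (hnc : ¬ ∀ z ∈ D, ∀ w ∈ D, f z = f w) :
    ∃ g : E → ℂ, DifferentiableOn ℂ g D ∧ MapsTo g D (ball 0 1) ∧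
      ∀ t < 1, ∃ w ∈ D, t < ‖g w‖ := by
  obtain ⟨C, hC⟩ := hbdd
  have hne : ((‖f ·‖) '' D).Nonempty := hconn.nonempty.image _
  have hbdd : BddAbove ((‖f ·‖) '' D) := ⟨C, by rintro _ ⟨z, hz, rfl⟩; exact hC z hz⟩
  set M := sSup ((‖f ·‖) '' D)
  have hlt : ∀ z ∈ D, ‖f z‖ < M := by
    intro z hz
    refine (le_csSup hbdd ⟨z, hz, rfl⟩).lt_of_ne fun hzM => hnc fun x hx y hy => ?_
    have hmax : IsMaxOn (‖f ·‖) D z := fun x hx => hzM ▸ le_csSup hbdd ⟨x, hx, rfl⟩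
    have hconst := Complex.eqOn_of_isPreconnected_of_isMaxOn_norm hconn.isPreconnected hopen hf hz
      hmax
    rw [hconst hx, hconst hy]
    rfl
  obtain ⟨z₀, hz₀⟩ := hconn.nonempty
  have hM : 0 < M := (norm_nonneg _).trans_lt (hlt z₀ hz₀)
  have hnorm : ∀ z, ‖f z / M‖ = ‖f z‖ / M := fun z => by
    rw [norm_div, Complex.norm_real, Real.norm_of_nonneg hM.le]
  refine ⟨fun z => f z / M, hf.mul_const _, fun z hz => ?_, fun t ht => ?_⟩
  · rw [mem_ball_zero_iff, hnorm, div_lt_one hM]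
    exact hlt z hz
  · obtain ⟨_, ⟨w, hw, rfl⟩, hltw⟩ := exists_lt_of_lt_csSup hne
      (by nlinarith : t * M < M)
    exact ⟨w, hw, by rwa [hnorm, lt_div_iff₀ hM]⟩

theorem exists_le_kobayashi_of_bounded {D : Set E} (hopen : IsOpen D) (hconn : IsConnected D)
    (hD : IsDiscConnected D) (hbdd : ∃ f : E → ℂ, DifferentiableOn ℂ f D ∧
      (∃ C : ℝ, ∀ z ∈ D, ‖f z‖ ≤ C) ∧ ¬ (∀ z ∈ D, ∀ w ∈ D, f z = f w)) (R : ℝ) :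
    ∃ z ∈ D, ∃ w ∈ D, R ≤ kobayashi D z w := by
  obtain ⟨f, hf, hC, hnc⟩ := hbdd
  obtain ⟨g, hg, hgD, hsup⟩ := exists_mapsTo_ball_forall_lt_norm hopen hconn hf hC hnc
  obtain ⟨z, hz⟩ := hconn.nonempty
  exact ⟨z, hz, exists_le_kobayashi hD hg hgD hz hsup R⟩

/-- Take `p = (z₁, u₂)`, `q = (w₁, u₂)`, `x = (u₁, w₂)`, `w = (u₁, z₂)` with `uᵢ` an
almost-midpoint of far apart `zᵢ, wᵢ`: the diagonals `p q` and `w x` are long, while the four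
sides of the quadrilateral `p x q w` are only about half as long. -/
theorem not_gromovHyperbolicWith_prod {α β : Type*} {D₁ : Set α} {D₂ : Set β}
    {d₁ : α → α → ℝ} {d₂ : β → β → ℝ} {d : α × β → α × β → ℝ} (K : ℝ)
    (hfst : ∀ p ∈ D₁ ×ˢ D₂, ∀ q ∈ D₁ ×ˢ D₂, d₁ p.1 q.1 ≤ d p q)
    (hsnd : ∀ p ∈ D₁ ×ˢ D₂, ∀ q ∈ D₁ ×ˢ D₂, d₂ p.2 q.2 ≤ d p q)
    (hmax : ∀ a ∈ D₁, ∀ a' ∈ D₁, ∀ b ∈ D₂, ∀ b' ∈ D₂,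
      d (a, b) (a', b') ≤ max (d₁ a a') (d₂ b b') + K)
    (hcomm₂ : ∀ b ∈ D₂, ∀ b' ∈ D₂, d₂ b b' = d₂ b' b)
    (hmid₁ : ∀ a ∈ D₁, ∀ a' ∈ D₁, ∃ u ∈ D₁, d₁ a u ≤ d₁ a a' / 2 + K ∧ d₁ u a' ≤ d₁ a a' / 2 + K)
    (hmid₂ : ∀ b ∈ D₂, ∀ b' ∈ D₂, ∃ u ∈ D₂, d₂ b u ≤ d₂ b b' / 2 + K ∧ d₂ u b' ≤ d₂ b b' / 2 + K)
    (hunb₁ : ∀ R, ∃ a ∈ D₁, ∃ a' ∈ D₁, R ≤ d₁ a a')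
    (hunb₂ : ∀ R, ∃ b ∈ D₂, ∃ b' ∈ D₂, R ≤ d₂ b b') :
    ¬ GromovHyperbolicWith (D₁ ×ˢ D₂) d := by
  rintro ⟨C, hC⟩
  set R := C + 4 * K + 1
  obtain ⟨z₁, hz₁, w₁, hw₁, hR₁⟩ := hunb₁ R
  obtain ⟨z₂, hz₂, w₂, hw₂, hR₂⟩ := hunb₂ R
  obtain ⟨u₁, hu₁, hzu₁, huw₁⟩ := hmid₁ z₁ hz₁ w₁ hw₁
  obtain ⟨u₂, hu₂, hzu₂, huw₂⟩ := hmid₂ z₂ hz₂ w₂ hw₂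
  have hside : ∀ {x y}, x ≤ d₁ z₁ w₁ / 2 + K → y ≤ d₂ z₂ w₂ / 2 + K →
      max x y ≤ (d₁ z₁ w₁ + d₂ z₂ w₂ - R) / 2 + K := fun hx hy =>
    max_le (by linarith) (by linarith)
  have hpx := hmax z₁ hz₁ u₁ hu₁ u₂ hu₂ w₂ hw₂
  have hwq := hmax u₁ hu₁ w₁ hw₁ z₂ hz₂ u₂ hu₂
  have hxq := hmax u₁ hu₁ w₁ hw₁ w₂ hw₂ u₂ hu₂
  have hpw := hmax z₁ hz₁ u₁ hu₁ u₂ hu₂ z₂ hz₂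
  have hpq := hfst (z₁, u₂) ⟨hz₁, hu₂⟩ (w₁, u₂) ⟨hw₁, hu₂⟩
  have hwx := hsnd (u₁, z₂) ⟨hu₁, hz₂⟩ (u₁, w₂) ⟨hu₁, hw₂⟩
  have hxw := hsnd (u₁, w₂) ⟨hu₁, hw₂⟩ (u₁, z₂) ⟨hu₁, hz₂⟩
  rw [hcomm₂ w₂ hw₂ z₂ hz₂] at hxw
  rw [hcomm₂ w₂ hw₂ u₂ hu₂] at hxq
  rw [hcomm₂ u₂ hu₂ z₂ hz₂] at hpw
  have := hC (z₁, u₂) ⟨hz₁, hu₂⟩ (w₁, u₂) ⟨hw₁, hu₂⟩ (u₁, w₂) ⟨hu₁, hw₂⟩ (u₁, z₂) ⟨hu₁, hz₂⟩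
  rw [sub_le_iff_le_add, min_le_iff] at this
  rcases this with h | h
  · linarith [hside hzu₁ huw₂, hside huw₁ hzu₂]
  · linarith [hside huw₁ huw₂, hside hzu₁ hzu₂]

/-- **Corollary 3.** If `D₁ ⊆ ℂⁿ` and `D₂ ⊆ ℂᵐ` are Kobayashi hyperbolic domains
admitting non-constant bounded holomorphic functions, then the product domain
`D₁ × D₂ ⊆ ℂ^{n+m}` is not Gromov hyperbolic with respect to its Kobayashi distance. -/
theorem product_domain_not_gromov_kobayashi_hyperbolic
    {n m : ℕ}
    (D₁ : Set (EuclideanSpace ℂ (Fin n))) (D₂ : Set (EuclideanSpace ℂ (Fin m)))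
    (h₁open : IsOpen D₁) (h₁conn : IsConnected D₁)
    (h₂open : IsOpen D₂) (h₂conn : IsConnected D₂)
    (h₁hyp : ∀ z ∈ D₁, ∀ w ∈ D₁, z ≠ w → 0 < kobayashi D₁ z w)
    (h₂hyp : ∀ z ∈ D₂, ∀ w ∈ D₂, z ≠ w → 0 < kobayashi D₂ z w)
    (h₁bdd : ∃ f : EuclideanSpace ℂ (Fin n) → ℂ, DifferentiableOn ℂ f D₁ ∧
      (∃ C : ℝ, ∀ z ∈ D₁, ‖f z‖ ≤ C) ∧ ¬ (∀ z ∈ D₁, ∀ w ∈ D₁, f z = f w))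
    (h₂bdd : ∃ f : EuclideanSpace ℂ (Fin m) → ℂ, DifferentiableOn ℂ f D₂ ∧
      (∃ C : ℝ, ∀ z ∈ D₂, ‖f z‖ ≤ C) ∧ ¬ (∀ z ∈ D₂, ∀ w ∈ D₂, f z = f w)) :
    ¬ GromovHyperbolicWith (D₁ ×ˢ D₂) (kobayashi (D₁ ×ˢ D₂)) := by
  have hD₁ := isDiscConnected_of_kobayashi_pos h₁hyp
  have hD₂ := isDiscConnected_of_kobayashi_pos h₂hyp
  have hD := hD₁.prod hD₂
  exact not_gromovHyperbolicWith_prod 1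
    (fun p hp q hq => kobayashi_le_of_mapsTo hD differentiableOn_fst (fun _ h => h.1) hp hq)
    (fun p hp q hq => kobayashi_le_of_mapsTo hD differentiableOn_snd (fun _ h => h.2) hp hq)
    (fun a ha a' ha' b hb b' hb' => kobayashi_prod_le hD₁ hD₂ ha ha' hb hb' one_pos)
    (fun b hb b' hb' => kobayashi_comm hD₂ hb hb')
    (fun a ha a' ha' => exists_kobayashi_midpoint hD₁ ha ha' one_pos)
    (fun b hb b' hb' => exists_kobayashi_midpoint hD₂ hb hb' one_pos)
    (exists_le_kobayashi_of_bounded h₁open h₁conn hD₁ h₁bdd)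
    (exists_le_kobayashi_of_bounded h₂open h₂conn hD₂ h₂bdd)
end

section
/- Let D₀ ⊆ ℂ be a nonempty bounded convex open set and let ζ₀ ∈ D₀ be a point at maximal distance to the boundary, i.e. dist(ζ₀, ∂D₀) = sup_{ζ ∈ D₀} dist(ζ, ∂D₀). Let M = { p ∈ ∂D₀ : |p − ζ₀| = dist(ζ₀, ∂D₀) }. Then M is nonempty, and for every θ ∈ ℝ the set M is not contained in the open half-plane H_θ = { ζ ∈ ℂ : Re((ζ − ζ₀)·e^{−iθ}) < 0 }. -/
/-!
If every nearest boundary point of `ζ₀` lay in the open half-plane `H_θ`, then moving `ζ₀` a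
little in the direction `e^{iθ}` would strictly increase its distance to each nearest boundary
point, while the boundary points outside `H_θ` are uniformly farther away by compactness.
So `dist(·, ∂D₀)` would increase, contradicting the maximality of `ζ₀`, which is a local
maximum since the ball of radius `dist(ζ₀, ∂D₀)` about `ζ₀` lies in `D₀`.
-/

open Metric Set Complex

section Metric

variable {α : Type*} [PseudoMetricSpace α]

theorem exists_pos_add_le_dist_of_nearest_subset {K U : Set α} {x : α} (hK : IsCompact K)
    (hU : IsOpen U) (hnear : {p ∈ K | dist p x = infDist x K} ⊆ U) :
    ∃ δ > 0, ∀ p ∈ K, p ∉ U → infDist x K + δ ≤ dist p x := by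
  rcases (K \ U).eq_empty_or_nonempty with hempty | hne
  · exact ⟨1, one_pos, fun p hp hpU => absurd ⟨hp, hpU⟩ (hempty.subset ·)⟩
  obtain ⟨q, ⟨hqK, hqU⟩, hq⟩ :=
    (hK.diff hU).exists_isMinOn hne (f := (dist · x))
      (continuous_id.dist continuous_const).continuousOn
  have hlt : infDist x K < dist q x :=
    (dist_comm x q ▸ infDist_le_dist_of_mem hqK).lt_of_ne fun h => hqU (hnear ⟨hqK, h.symm⟩)
  exact ⟨dist q x - infDist x K, sub_pos.2 hlt, fun p hp hpU => by
    linarith [isMinOn_iff.1 hq p ⟨hp, hpU⟩]⟩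

end Metric

section InnerProduct

variable {E : Type*} [NormedAddCommGroup E] [InnerProductSpace ℝ E]

theorem norm_lt_norm_sub_smul_of_inner_neg {v u : E} (hvu : inner ℝ v u < 0) {ε : ℝ}
    (hε : 0 < ε) : ‖v‖ < ‖v - ε • u‖ := by
  have hsq :
      ‖v - ε • u‖ ^ 2 = ‖v‖ ^ 2 - 2 * ε * inner ℝ v u + ε ^ 2 * ‖u‖ ^ 2 := by
    rw [norm_sub_sq_real, real_inner_smul_right, norm_smul, Real.norm_of_nonneg hε.le]
    ring
  refine lt_of_pow_lt_pow_left₀ 2 (norm_nonneg _) ?_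
  nlinarith [mul_pos hε (neg_pos.2 hvu), sq_nonneg (ε * ‖u‖)]

theorem not_isLocalMax_infDist_of_inner_neg {K : Set E} {x u : E} (hK : IsCompact K)
    (hKne : K.Nonempty)
    (hnear : ∀ p ∈ K, dist p x = infDist x K → inner ℝ (p - x) u < 0) :
    ¬ IsLocalMax (infDist · K) x := by
  intro hmax
  obtain ⟨η, hη, hball⟩ := Metric.eventually_nhds_iff.1 hmax
  obtain ⟨δ, hδ, hfar⟩ := exists_pos_add_le_dist_of_nearest_subset hK
    (isOpen_lt (by fun_prop) continuous_const) (U := {p | inner ℝ (p - x) u < 0})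
    fun p ⟨hp, hpx⟩ => hnear p hp hpx
  obtain ⟨ε, hε, hεu⟩ := exists_pos_mul_lt (lt_min hδ hη) ‖u‖
  set y := x + ε • u
  have hyx : dist y x = ‖u‖ * ε := by
    rw [dist_eq_norm, add_sub_cancel_left, norm_smul, Real.norm_of_nonneg hε.le, mul_comm]
  have hclose : ∀ p ∈ K, infDist x K < dist p y := by
    intro p hp
    by_cases hpU : inner ℝ (p - x) u < 0
    · calc infDist x K ≤ dist p x := dist_comm x p ▸ infDist_le_dist_of_mem hp
        _ = ‖p - x‖ := dist_eq_norm p x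
        _ < ‖p - x - ε • u‖ := norm_lt_norm_sub_smul_of_inner_neg hpU hε
        _ = dist p y := by rw [dist_eq_norm, sub_add_eq_sub_sub]
    · linarith [hfar p hp hpU, dist_triangle p y x, min_le_left δ η]
  obtain ⟨q, hqK, hq⟩ := hK.exists_infDist_eq_dist hKne y
  have hyη : dist y x < η := by linarith [min_le_right δ η]
  linarith [hball hyη, hclose q hqK, dist_comm y q]

end InnerProduct

theorem ball_infDist_frontier_subset {E : Type*} [NormedAddCommGroup E] [NormedSpace ℝ E]
    [FiniteDimensional ℝ E] {s : Set E} {x : E} (hx : x ∈ s) :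
    ball x (infDist x (frontier s)) ⊆ s := by
  rcases eq_or_ne s univ with rfl | hs
  · exact subset_univ _
  obtain ⟨y, hy, hxy⟩ := exists_mem_frontier_infDist_compl_eq_dist hx hs
  exact (ball_subset_ball (hxy ▸ infDist_le_dist_of_mem hy)).trans ball_infDist_compl_subset

theorem Complex.re_mul_exp_neg_mul_I (z : ℂ) (θ : ℝ) :
    (z * exp (-(θ : ℂ) * I)).re = inner ℝ z (exp (θ * I)) := by
  rw [Complex.inner, ← conj_re, map_mul, ← exp_conj, mul_comm]
  simp

theorem contact_set_nonempty_not_in_halfplane_general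
    (D₀ : Set ℂ) (hbdd : Bornology.IsBounded D₀) (ζ₀ : ℂ) (hζ₀ : ζ₀ ∈ D₀)
    (hmax : ∀ ζ ∈ D₀, infDist ζ (frontier D₀) ≤ infDist ζ₀ (frontier D₀)) :
    { p ∈ frontier D₀ | dist p ζ₀ = infDist ζ₀ (frontier D₀) }.Nonempty ∧
      ∀ θ : ℝ,
        ¬ ({ p ∈ frontier D₀ | dist p ζ₀ = infDist ζ₀ (frontier D₀) } ⊆
          { ζ : ℂ | ((ζ - ζ₀) * Complex.exp (-(θ : ℂ) * Complex.I)).re < 0 }) := by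
  have hK : IsCompact (frontier D₀) :=
    isCompact_of_isClosed_isBounded isClosed_frontier
      (hbdd.closure.subset frontier_subset_closure)
  have hKne : (frontier D₀).Nonempty := nonempty_frontier_iff.2
    ⟨⟨ζ₀, hζ₀⟩, fun h => NormedSpace.unbounded_univ ℝ ℂ (h ▸ hbdd)⟩
  obtain ⟨p₀, hp₀, hp₀ζ₀⟩ := hK.exists_infDist_eq_dist hKne ζ₀
  have hp₀r : dist p₀ ζ₀ = infDist ζ₀ (frontier D₀) := by rw [hp₀ζ₀, dist_comm]
  refine ⟨⟨p₀, hp₀, hp₀r⟩, fun θ hsub => ?_⟩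
  simp only [re_mul_exp_neg_mul_I] at hsub
  have hr : 0 < infDist ζ₀ (frontier D₀) := by
    have hp₀H : inner ℝ (p₀ - ζ₀) (exp (θ * I)) < 0 := hsub ⟨hp₀, hp₀r⟩
    refine hp₀r ▸ dist_pos.2 fun h => ?_
    simp [h] at hp₀H
  have hloc : IsLocalMax (infDist · (frontier D₀)) ζ₀ :=
    Filter.eventually_of_mem (ball_mem_nhds ζ₀ hr) fun ζ hζ =>
      hmax ζ (ball_infDist_frontier_subset hζ₀ hζ)
  exact not_isLocalMax_infDist_of_inner_neg hK hKne (fun p hp hpr => hsub ⟨hp, hpr⟩) hloc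

/-- Let `D₀ ⊆ ℂ` be a nonempty bounded convex open set and `ζ₀ ∈ D₀` a point at
maximal distance to the boundary. Then the set
`M = { p ∈ ∂D₀ : |p − ζ₀| = dist(ζ₀, ∂D₀) }` is nonempty and, for every `θ ∈ ℝ`, `M`
is not contained in the half-plane `{ ζ : Re((ζ − ζ₀) e^{−iθ}) < 0 }`. -/
theorem contact_set_nonempty_not_in_halfplane
    (D₀ : Set ℂ) (hne : D₀.Nonempty) (hconv : Convex ℝ D₀) (hopen : IsOpen D₀)
    (hbdd : Bornology.IsBounded D₀) (ζ₀ : ℂ) (hζ₀ : ζ₀ ∈ D₀)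
    (hmax : ∀ ζ ∈ D₀, infDist ζ (frontier D₀) ≤ infDist ζ₀ (frontier D₀)) :
    { p ∈ frontier D₀ | dist p ζ₀ = infDist ζ₀ (frontier D₀) }.Nonempty ∧
      ∀ θ : ℝ,
        ¬ ({ p ∈ frontier D₀ | dist p ζ₀ = infDist ζ₀ (frontier D₀) } ⊆
          { ζ : ℂ | ((ζ - ζ₀) * Complex.exp (-(θ : ℂ) * Complex.I)).re < 0 }) :=
  contact_set_nonempty_not_in_halfplane_general D₀ hbdd ζ₀ hζ₀ hmax
end

section
/- Let D₀ ⊆ ℂ be a nonempty bounded convex open set and let ζ₀ ∈ D₀ be a point at maximal distance to the boundary, i.e. dist(ζ₀, ∂D₀) = sup_{ζ ∈ D₀} dist(ζ, ∂D₀); write R = dist(ζ₀, ∂D₀). Then there exist two distinct points p̂, q̂ ∈ ∂D₀ with |p̂ − ζ₀| = |q̂ − ζ₀| = R and |p̂ − q̂| ≥ √3 · R. -/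
/-!
If the contact points of `ζ₀` (the boundary points at the minimal distance `R`) all lay in an
open half-plane `{r | 0 < ⟪r - ζ₀, v⟫}`, then moving `ζ₀` slightly in the direction `-v` would
push it away from every contact point and, by compactness of the boundary, from all of it,
contradicting maximality. So it suffices to show that contact points pairwise closer than `√3 R`
lie in such a half-plane. Take a pair `p, q` of contact points at maximal distance: they subtend
an angle below `120°`, and every other contact point, being no farther from `p` or `q` than they
are from each other, lies on the arc between them, hence in the half-plane of `v = p + q - 2ζ₀`.
-/

open Metric Set Filter Topology
open scoped RealInnerProductSpace

section InnerProductSpace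

variable {E : Type*} [NormedAddCommGroup E] [InnerProductSpace ℝ E]

theorem real_inner_sub_sub_of_mem_sphere {a b c : E} {R : ℝ} (ha : a ∈ sphere c R)
    (hb : b ∈ sphere c R) : ⟪a - c, b - c⟫ = R ^ 2 - dist a b ^ 2 / 2 := by
  rw [mem_sphere, dist_eq_norm] at ha hb
  rw [dist_eq_norm, ← sub_sub_sub_cancel_right a b c, norm_sub_sq_real, ha, hb]
  ring

theorem dist_lt_dist_sub_smul_of_inner_pos {x r v : E} {ε : ℝ} (hε : 0 < ε)
    (hv : 0 < ⟪r - x, v⟫) : dist x r < dist (x - ε • v) r := by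
  have hsq : dist x r ^ 2 < dist (x - ε • v) r ^ 2 := by
    rw [dist_eq_norm, dist_eq_norm, sub_right_comm, norm_sub_sq_real (x - r), inner_smul_right,
      ← neg_sub r x, inner_neg_left]
    nlinarith [sq_nonneg ‖ε • v‖]
  exact lt_of_pow_lt_pow_left₀ 2 dist_nonneg hsq

variable {F : Set E} {x v : E}

theorem eventually_infDist_lt_dist_sub_smul (hF : IsCompact F)
    (hv : ∀ r ∈ F ∩ sphere x (infDist x F), 0 < ⟪r - x, v⟫) :
    ∀ᶠ ε in 𝓝[>] (0 : ℝ), ∀ r ∈ F, infDist x F < dist (x - ε • v) r := by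
  have hcont : Continuous fun z : ℝ × E => x - z.1 • v := by fun_prop
  refine eventually_nhdsWithin_iff.2 <| (hF.eventually_forall_of_forall_eventually
    (P := fun ε r => 0 < ε → r ∈ F → infDist x F < dist (x - ε • v) r) fun r hr => ?_).mono
    fun ε h hε r hr => h r hr hε hr
  rcases (infDist_le_dist_of_mem hr).lt_or_eq with hfar | hcontact
  · have hlim : Tendsto (fun z : ℝ × E => dist (x - z.1 • v) z.2) (𝓝 (0, r)) (𝓝 (dist x r)) := by
      simpa using ((hcont.dist continuous_snd).tendsto (0, r))
    exact (hlim.eventually_const_lt hfar).mono fun z h _ _ => h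
  · have hinner : 0 < ⟪r - x, v⟫ := hv r ⟨hr, by rw [mem_sphere, dist_comm, hcontact]⟩
    have hlim : Tendsto (fun z : ℝ × E => ⟪z.2 - x, v⟫) (𝓝 (0, r)) (𝓝 ⟪r - x, v⟫) :=
      ((continuous_snd.sub continuous_const).inner continuous_const).tendsto (0, r)
    exact (hlim.eventually_const_lt hinner).mono fun z h hε hz =>
      (infDist_le_dist_of_mem hz).trans_lt (dist_lt_dist_sub_smul_of_inner_pos hε h)

theorem not_isLocalMax_infDist (hF : IsCompact F) (hFne : F.Nonempty)
    (hv : ∀ r ∈ F ∩ sphere x (infDist x F), 0 < ⟪r - x, v⟫) :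
    ¬ IsLocalMax (infDist · F) x := by
  intro hmax
  have hpath : Tendsto (fun ε : ℝ => x - ε • v) (𝓝[>] 0) (𝓝 x) := by
    have : Continuous fun ε : ℝ => x - ε • v := by fun_prop
    simpa using (this.tendsto 0).mono_left nhdsWithin_le_nhds
  obtain ⟨ε, hle, hlt⟩ :=
    ((hpath.eventually hmax).and (eventually_infDist_lt_dist_sub_smul hF hv)).exists
  obtain ⟨r, hr, hdist⟩ := hF.exists_infDist_eq_dist hFne (x - ε • v)
  exact (hlt r hr).not_ge (hdist ▸ hle)

end InnerProductSpace

/-- Three vectors in a plane are linearly dependent, so their Gram determinant vanishes. -/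
theorem Complex.gram_det_real_inner_eq_zero (u p q : ℂ) :
    ‖u‖ ^ 2 * ‖p‖ ^ 2 * ‖q‖ ^ 2 + 2 * ⟪u, p⟫ * ⟪u, q⟫ * ⟪p, q⟫ -
      (‖u‖ ^ 2 * ⟪p, q⟫ ^ 2 + ‖p‖ ^ 2 * ⟪u, q⟫ ^ 2 + ‖q‖ ^ 2 * ⟪u, p⟫ ^ 2) = 0 := by
  simp only [Complex.inner, ← Complex.normSq_eq_norm_sq, Complex.normSq_apply, Complex.mul_re,
    Complex.conj_re, Complex.conj_im]
  ring

theorem Complex.inner_sub_pos_of_dist_le_of_dist_lt_sqrt_three {c u p q : ℂ} {R : ℝ}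
    (hu : u ∈ sphere c R) (hp : p ∈ sphere c R) (hq : q ∈ sphere c R)
    (hup : dist u p ≤ dist p q) (huq : dist u q ≤ dist p q) (hpq : dist p q < √3 * R) :
    0 < ⟪u - c, (p - c) + (q - c)⟫ := by
  have hR : 0 < R := pos_of_mul_pos_right (dist_nonneg.trans_lt hpq) (Real.sqrt_nonneg 3)
  have hpq3 : dist p q ^ 2 < 3 * R ^ 2 := by
    simpa [mul_pow] using pow_lt_pow_left₀ hpq dist_nonneg two_ne_zero
  have ha : -(R ^ 2 / 2) < ⟪p - c, q - c⟫ := by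
    rw [real_inner_sub_sub_of_mem_sphere hp hq]; linarith
  have hx : ⟪p - c, q - c⟫ ≤ ⟪u - c, p - c⟫ := by
    rw [real_inner_sub_sub_of_mem_sphere hp hq, real_inner_sub_sub_of_mem_sphere hu hp]
    linarith [pow_le_pow_left₀ dist_nonneg hup 2]
  have hy : ⟪p - c, q - c⟫ ≤ ⟪u - c, q - c⟫ := by
    rw [real_inner_sub_sub_of_mem_sphere hp hq, real_inner_sub_sub_of_mem_sphere hu hq]
    linarith [pow_le_pow_left₀ dist_nonneg huq 2]
  have hgram := Complex.gram_det_real_inner_eq_zero (u - c) (p - c) (q - c)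
  rw [← dist_eq_norm, ← dist_eq_norm, ← dist_eq_norm, mem_sphere.1 hu, mem_sphere.1 hp,
    mem_sphere.1 hq] at hgram
  rw [inner_add_right]
  set x := ⟪u - c, p - c⟫
  set y := ⟪u - c, q - c⟫
  set a := ⟪p - c, q - c⟫
  -- With `s = x + y ≤ 0` and `t = x - y` the Gram relation reads
  -- `2ρ(ρ² - a²) = (ρ - a)s² + (ρ + a)t²` (`ρ = R²`), which `t² ≤ (s - 2a)²` and `2a ≤ s ≤ 0`
  -- bound by `4a²(ρ - a)`; this forces `a ≤ -ρ/2`.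
  by_contra! hs
  nlinarith [mul_nonneg (sub_nonneg.2 hx) (sub_nonneg.2 hy),
    mul_nonneg (neg_nonneg.2 hs) (by linarith : 0 ≤ x + y - 2 * a),
    mul_pos (pow_pos hR 2) (by linarith : 0 < 2 * a + R ^ 2)]

theorem Complex.exists_inner_sub_pos_of_dist_lt_sqrt_three {K : Set ℂ} (hK : IsCompact K)
    {c : ℂ} {R : ℝ} (hKR : K ⊆ sphere c R) (hK3 : ∀ u ∈ K, ∀ w ∈ K, dist u w < √3 * R) :
    ∃ v : ℂ, ∀ u ∈ K, 0 < ⟪u - c, v⟫ := by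
  rcases K.eq_empty_or_nonempty with rfl | hne
  · exact ⟨0, by simp⟩
  obtain ⟨⟨p, q⟩, ⟨hp, hq⟩, hmax⟩ :=
    (hK.prod hK).exists_isMaxOn (hne.prod hne) continuous_dist.continuousOn
  refine ⟨(p - c) + (q - c), fun u hu => ?_⟩
  exact Complex.inner_sub_pos_of_dist_le_of_dist_lt_sqrt_three (hKR hu) (hKR hp) (hKR hq)
    (isMaxOn_iff.1 hmax (u, p) ⟨hu, hp⟩) (isMaxOn_iff.1 hmax (u, q) ⟨hu, hq⟩) (hK3 p hp q hq)

theorem exists_two_far_contact_points_general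
    (D₀ : Set ℂ) (hopen : IsOpen D₀)
    (hbdd : Bornology.IsBounded D₀) (ζ₀ : ℂ) (hζ₀ : ζ₀ ∈ D₀)
    (hmax : ∀ ζ ∈ D₀, infDist ζ (frontier D₀) ≤ infDist ζ₀ (frontier D₀)) :
    ∃ p q : ℂ, p ∈ frontier D₀ ∧ q ∈ frontier D₀ ∧ p ≠ q ∧
      dist p ζ₀ = infDist ζ₀ (frontier D₀) ∧
      dist q ζ₀ = infDist ζ₀ (frontier D₀) ∧
      Real.sqrt 3 * infDist ζ₀ (frontier D₀) ≤ dist p q := by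
  have hF : IsCompact (frontier D₀) :=
    hbdd.isCompact_closure.of_isClosed_subset isClosed_frontier frontier_subset_closure
  have hFne : (frontier D₀).Nonempty :=
    nonempty_frontier_iff.2 ⟨⟨ζ₀, hζ₀⟩, fun h => NormedSpace.unbounded_univ ℝ ℂ (h ▸ hbdd)⟩
  have hR : 0 < infDist ζ₀ (frontier D₀) :=
    (isClosed_frontier.notMem_iff_infDist_pos hFne).1 fun h => (hopen.frontier_eq ▸ h).2 hζ₀
  by_contra! hfar
  obtain ⟨v, hv⟩ := Complex.exists_inner_sub_pos_of_dist_lt_sqrt_three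
    (hF.inter_right isClosed_sphere) inter_subset_right fun p hp q hq => by
      rcases eq_or_ne p q with rfl | hpq
      · simpa using hR
      · exact hfar p q hp.1 hq.1 hpq hp.2 hq.2
  exact not_isLocalMax_infDist hF hFne hv ((isMaxOn_iff.2 hmax).isLocalMax (hopen.mem_nhds hζ₀))

/-- Let `D₀ ⊆ ℂ` be a nonempty bounded convex open set and `ζ₀ ∈ D₀` a point at
maximal distance `R` to the boundary. Then there are two distinct boundary points
`p̂, q̂` with `|p̂ − ζ₀| = |q̂ − ζ₀| = R` and `|p̂ − q̂| ≥ √3 · R`. -/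
theorem exists_two_far_contact_points
    (D₀ : Set ℂ) (hne : D₀.Nonempty) (hconv : Convex ℝ D₀) (hopen : IsOpen D₀)
    (hbdd : Bornology.IsBounded D₀) (ζ₀ : ℂ) (hζ₀ : ζ₀ ∈ D₀)
    (hmax : ∀ ζ ∈ D₀, infDist ζ (frontier D₀) ≤ infDist ζ₀ (frontier D₀)) :
    ∃ p q : ℂ, p ∈ frontier D₀ ∧ q ∈ frontier D₀ ∧ p ≠ q ∧
      dist p ζ₀ = infDist ζ₀ (frontier D₀) ∧
      dist q ζ₀ = infDist ζ₀ (frontier D₀) ∧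
      Real.sqrt 3 * infDist ζ₀ (frontier D₀) ≤ dist p q :=
  exists_two_far_contact_points_general D₀ hopen hbdd ζ₀ hζ₀ hmax
end

section
/- Let ε₀ > 0 and let ψ : [0, ε₀) → ℝ be a nonnegative convex differentiable function with ψ(0) = 0, ψ(x) > 0 for x ∈ (0, ε₀), and limsup_{x→0⁺} ( log ψ(x) / log x ) = ∞. Then for every ε > 0 and every A > 0 there exists x ∈ (0, min(ε, ε₀)) such that x·ψ'(x) / ψ(x) > A. -/
open Set Filter

/-- **Lemma 3.** If `ψ : [0, ε₀) → ℝ` is a nonnegative convex differentiable function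
with `ψ(0) = 0`, `ψ > 0` on `(0, ε₀)`, and `limsup_{x→0⁺} log ψ(x)/log x = ∞`
(equivalently: for every `A`, frequently `log ψ(x)/log x > A` as `x → 0⁺`), then for
all `ε > 0` and `A > 0` there is `x ∈ (0, min ε ε₀)` with `x·ψ'(x)/ψ(x) > A`. -/
theorem exists_large_logarithmic_derivative
    (ε₀ : ℝ) (hε₀ : 0 < ε₀) (ψ ψ' : ℝ → ℝ)
    (hnonneg : ∀ x ∈ Ico (0 : ℝ) ε₀, 0 ≤ ψ x)
    (hconv : ConvexOn ℝ (Ico 0 ε₀) ψ)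
    (hdiff : ∀ x ∈ Ico (0 : ℝ) ε₀, HasDerivWithinAt ψ (ψ' x) (Ico 0 ε₀) x)
    (hψ0 : ψ 0 = 0)
    (hpos : ∀ x ∈ Ioo (0 : ℝ) ε₀, 0 < ψ x)
    (hlimsup : ∀ A : ℝ, ∃ᶠ x in nhdsWithin (0 : ℝ) (Ioi 0),
      A < Real.log (ψ x) / Real.log x) :
    ∀ ε > (0 : ℝ), ∀ A > (0 : ℝ), ∃ x ∈ Ioo (0 : ℝ) (min ε ε₀),
      A < x * ψ' x / ψ x := by
  intro ε hε A hA
  by_contra hcon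
  push_neg at hcon
  set m := min ε ε₀ with hm
  have hm0 : 0 < m := lt_min hε hε₀
  set b := m / 2 with hb
  have hb0 : 0 < b := by positivity
  have hbm : b < m := half_lt_self hm0
  have hbε₀ : b < ε₀ := lt_of_lt_of_le hbm (min_le_right _ _)
  have hsub : Ioc (0:ℝ) b ⊆ Ioo 0 ε₀ := fun x hx => ⟨hx.1, lt_of_le_of_lt hx.2 hbε₀⟩
  set g : ℝ → ℝ := fun t => Real.log (ψ t) - A * Real.log t with hg
  have hderiv : ∀ x ∈ Ioo (0:ℝ) ε₀, HasDerivAt g (ψ' x / ψ x - A * x⁻¹) x := by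
    intro x hx
    have hψd : HasDerivAt ψ (ψ' x) x :=
      (hdiff x ⟨hx.1.le, hx.2⟩).hasDerivAt (Ico_mem_nhds hx.1 hx.2)
    have hψx : ψ x ≠ 0 := (hpos x hx).ne'
    have h1 : HasDerivAt (fun t => Real.log (ψ t)) (ψ' x / ψ x) x := hψd.log hψx
    have h2 : HasDerivAt Real.log x⁻¹ x := Real.hasDerivAt_log hx.1.ne'
    exact h1.sub (h2.const_mul A)
  have hanti : AntitoneOn g (Ioc 0 b) := by
    apply antitoneOn_of_deriv_nonpos (convex_Ioc _ _)
    · intro x hx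
      exact ((hderiv x (hsub hx)).differentiableAt).continuousAt.continuousWithinAt
    · intro x hx
      rw [interior_Ioc] at hx
      exact ((hderiv x (hsub ⟨hx.1, hx.2.le⟩)).differentiableAt).differentiableWithinAt
    · intro x hx
      rw [interior_Ioc] at hx
      have hx' : x ∈ Ioo 0 ε₀ := ⟨hx.1, hx.2.trans hbε₀⟩
      rw [(hderiv x hx').deriv]
      have hle : x * ψ' x / ψ x ≤ A := hcon x ⟨hx.1, hx.2.trans hbm⟩
      have hψx : 0 < ψ x := hpos x hx'
      have hq : ψ' x / ψ x ≤ A / x := by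
        rw [le_div_iff₀ hx.1]
        calc ψ' x / ψ x * x = x * ψ' x / ψ x := by ring
          _ ≤ A := hle
      have hAx : A * x⁻¹ = A / x := (div_eq_mul_inv A x).symm
      linarith
  -- extract a point from the frequency hypothesis
  set δ := min b (min 1 (Real.exp (g b))) with hδ
  have hδ0 : 0 < δ := lt_min hb0 (lt_min one_pos (Real.exp_pos _))
  obtain ⟨x, hx1, hx2⟩ := ((hlimsup (A + 1)).and_eventually
    (Ioo_mem_nhdsGT_of_mem ⟨le_refl (0:ℝ), hδ0⟩)).exists
  have hx0 : 0 < x := hx2.1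
  have hxb : x ≤ b := le_trans hx2.2.le (min_le_left _ _)
  have hx1lt : x < 1 := lt_of_lt_of_le hx2.2 ((min_le_right _ _).trans (min_le_left _ _))
  have hxexp : x < Real.exp (g b) :=
    lt_of_lt_of_le hx2.2 ((min_le_right _ _).trans (min_le_right _ _))
  have hlogx : Real.log x < 0 := Real.log_neg hx0 hx1lt
  have hlogC : Real.log x < g b := by
    have := Real.log_lt_log hx0 hxexp
    rwa [Real.log_exp] at this
  have hga : g b ≤ g x := hanti ⟨hx0, hxb⟩ ⟨hb0, le_refl b⟩ hxb
  have hupper : Real.log (ψ x) < (A + 1) * Real.log x := by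
    rw [lt_div_iff_of_neg hlogx] at hx1
    exact hx1
  have hga' : Real.log (ψ b) - A * Real.log b ≤ Real.log (ψ x) - A * Real.log x := hga
  have hlogC' : Real.log x < Real.log (ψ b) - A * Real.log b := hlogC
  have hexp : (A + 1) * Real.log x = A * Real.log x + Real.log x := by ring
  linarith
end

section
/- Let L > 0 and let ψ : [0, ∞) → [0, ∞) be a convex differentiable function with ψ(0) = 0 and ψ'(0) = 0 whose derivative ψ' is Lipschitz with constant L. Define the domain D = { z = (z₁, z₂) ∈ ℂ² : Re z₁ > ψ(|z₂|) }. Then for every x ≥ 0 with L·ψ(x) ≤ 1, the Euclidean distance from the point q = (ψ(x), 0) to the boundary ∂D equals ψ(x). -/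
/-!
The origin lies on `∂D` at distance `ψ(x)` from `q`, so it remains to show that the open
ball of radius `a = ψ(x)` about `q = (a, 0)` lies in `D`. Since `ψ(0) = ψ'(0) = 0` and `ψ'` is
`L`-Lipschitz, `ψ(t) ≤ L t² / 2`; a point `(z₁, z₂)` of the ball with `u = Re z₁`, `t = |z₂|`
satisfies `t² < 2au − u²` and `u > 0`, whence `ψ(t) ≤ L a u − L u² / 2 ≤ u − L u² / 2`
because `L a ≤ 1`; this is `< u` unless `L = 0`, and then `ψ(t) ≤ 0 < u`.
-/

open Set Metric Filter Topology

theorem le_mul_sq_div_two_of_lipschitzOnWith_deriv {f f' : ℝ → ℝ} {L : NNReal}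
    (hf : ∀ x ∈ Ici (0 : ℝ), HasDerivWithinAt f (f' x) (Ici 0) x) (hf0 : f 0 = 0)
    (hf'0 : f' 0 = 0) (hlip : LipschitzOnWith L f' (Ici 0)) {t : ℝ} (ht : 0 ≤ t) :
    f t ≤ L * t ^ 2 / 2 := by
  have hf'_le : ∀ s ∈ Ici (0 : ℝ), f' s ≤ L * s := fun s hs => by
    have := hlip.dist_le_mul s hs 0 self_mem_Ici
    rw [Real.dist_eq, Real.dist_eq, hf'0, sub_zero, sub_zero,
      abs_of_nonneg (show (0 : ℝ) ≤ s from hs)] at this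
    exact (le_abs_self _).trans this
  have hmono : MonotoneOn (fun s => L * s ^ 2 / 2 - f s) (Ici 0) := by
    refine monotoneOn_of_hasDerivWithinAt_nonneg (f' := fun s => L * s - f' s) (convex_Ici 0)
      ?_ (fun s hs => ?_) (fun s hs => ?_)
    · exact (Continuous.continuousOn (by fun_prop)).sub fun s hs => (hf s hs).continuousWithinAt
    · rw [interior_Ici] at hs ⊢
      have hsq : HasDerivAt (fun s : ℝ => L * s ^ 2 / 2) (L * s) s := by
        refine (((hasDerivAt_pow 2 s).const_mul (L : ℝ)).div_const 2).congr_deriv ?_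
        push_cast
        ring
      exact hsq.hasDerivWithinAt.sub ((hf s (mem_Ici.2 hs.out.le)).mono Ioi_subset_Ici_self)
    · rw [interior_Ici] at hs
      exact sub_nonneg.2 (hf'_le s (mem_Ici.2 hs.out.le))
  simpa [hf0] using hmono self_mem_Ici ht ht

theorem infDist_frontier_eq_of_ball_subset {X : Type*} [PseudoMetricSpace X] {s : Set X}
    {x y : X} {r : ℝ} (hball : ball x r ⊆ s) (hy : y ∈ frontier s) (hxy : dist x y = r) :
    infDist x (frontier s) = r := by
  refine le_antisymm (hxy ▸ infDist_le_dist_of_mem hy) ((le_infDist ⟨y, hy⟩).2 fun z hz => ?_)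
  by_contra! hzr
  exact hz.2 (interior_maximal hball isOpen_ball (mem_ball'.2 hzr))

def modelDomain (ψ : ℝ → ℝ) : Set (EuclideanSpace ℂ (Fin 2)) :=
  { z | ψ ‖z 1‖ < (z 0).re }

theorem zero_mem_frontier_modelDomain {ψ : ℝ → ℝ} (hψ0 : ψ 0 = 0) :
    0 ∈ frontier (modelDomain ψ) := by
  refine ⟨?_, fun h => by simpa [modelDomain, hψ0] using interior_subset h⟩
  have hray : Tendsto (fun t : ℝ => t • EuclideanSpace.single (0 : Fin 2) (1 : ℂ))
      (𝓝[>] 0) (𝓝 0) :=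
    tendsto_nhdsWithin_of_tendsto_nhds ((by fun_prop : Continuous fun t : ℝ =>
      t • EuclideanSpace.single (0 : Fin 2) (1 : ℂ)).tendsto' 0 0 (zero_smul _ _))
  refine mem_closure_of_tendsto hray (eventually_nhdsWithin_of_forall fun t ht => ?_)
  simpa [modelDomain, hψ0] using ht

theorem norm_equiv_symm_ofReal_zero (a : ℝ) :
    ‖(WithLp.equiv 2 (Fin 2 → ℂ)).symm ![(a : ℂ), 0]‖ = |a| := by
  simp [EuclideanSpace.norm_eq, Fin.sum_univ_two, Real.sqrt_sq_eq_abs]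

theorem ball_subset_modelDomain {ψ : ℝ → ℝ} {L a : ℝ}
    (hquad : ∀ t, 0 ≤ t → ψ t ≤ L * t ^ 2 / 2) (hLa : L * a ≤ 1) :
    ball ((WithLp.equiv 2 (Fin 2 → ℂ)).symm ![(a : ℂ), 0]) a ⊆ modelDomain ψ := by
  intro z hz
  have ha : 0 < a := pos_of_mem_ball hz
  rw [mem_ball, EuclideanSpace.dist_eq, Fin.sum_univ_two, Real.sqrt_lt' ha] at hz
  have hre : |(z 0).re - a| ≤ dist (z 0) a := by
    simpa [Complex.dist_eq] using Complex.abs_re_le_norm (z 0 - a)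
  have hkey : ((z 0).re - a) ^ 2 + ‖z 1‖ ^ 2 < a ^ 2 := by
    have := sq_abs ((z 0).re - a) ▸ pow_le_pow_left₀ (abs_nonneg _) hre 2
    simp only [WithLp.equiv_symm_apply, Matrix.cons_val_zero, Matrix.cons_val_one,
      dist_zero_right] at hz
    linarith
  have hψ := hquad ‖z 1‖ (norm_nonneg _)
  have hu : 0 < (z 0).re := by nlinarith [sq_nonneg ‖z 1‖]
  show ψ ‖z 1‖ < (z 0).re
  nlinarith [mul_le_mul_of_nonneg_right hLa hu.le]

theorem dist_to_boundary_of_model_domain_general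
    (L : NNReal) (ψ ψ' : ℝ → ℝ)
    (hnonneg : ∀ x ∈ Ici (0 : ℝ), 0 ≤ ψ x)
    (hdiff : ∀ x ∈ Ici (0 : ℝ), HasDerivWithinAt ψ (ψ' x) (Ici 0) x)
    (hψ0 : ψ 0 = 0) (hψ'0 : ψ' 0 = 0)
    (hlip : LipschitzOnWith L ψ' (Ici 0)) :
    ∀ x : ℝ, 0 ≤ x → (L : ℝ) * ψ x ≤ 1 →
      infDist ((WithLp.equiv 2 (Fin 2 → ℂ)).symm ![(ψ x : ℂ), 0])
        (frontier { z : EuclideanSpace ℂ (Fin 2) | ψ ‖z 1‖ < (z 0).re }) = ψ x := by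
  intro x hx hLx
  refine infDist_frontier_eq_of_ball_subset
    (ball_subset_modelDomain
      (fun t ht => le_mul_sq_div_two_of_lipschitzOnWith_deriv hdiff hψ0 hψ'0 hlip ht) hLx)
    (zero_mem_frontier_modelDomain hψ0) ?_
  rw [dist_zero_right, norm_equiv_symm_ofReal_zero, abs_of_nonneg (hnonneg x hx)]

/-- Let `ψ : [0,∞) → [0,∞)` be convex and differentiable with `ψ(0) = 0`, `ψ'(0) = 0`
and `ψ'` Lipschitz with constant `L > 0`, and let
`D = { z ∈ ℂ² : Re z₁ > ψ(|z₂|) }`. Then for every `x ≥ 0` with `L·ψ(x) ≤ 1`, the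
Euclidean distance from `q = (ψ(x), 0)` to `∂D` equals `ψ(x)`. -/
theorem dist_to_boundary_of_model_domain
    (L : NNReal) (hL : 0 < L) (ψ ψ' : ℝ → ℝ)
    (hnonneg : ∀ x ∈ Ici (0 : ℝ), 0 ≤ ψ x)
    (hconv : ConvexOn ℝ (Ici 0) ψ)
    (hdiff : ∀ x ∈ Ici (0 : ℝ), HasDerivWithinAt ψ (ψ' x) (Ici 0) x)
    (hψ0 : ψ 0 = 0) (hψ'0 : ψ' 0 = 0)
    (hlip : LipschitzOnWith L ψ' (Ici 0)) :
    ∀ x : ℝ, 0 ≤ x → (L : ℝ) * ψ x ≤ 1 →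
      infDist ((WithLp.equiv 2 (Fin 2 → ℂ)).symm ![(ψ x : ℂ), 0])
        (frontier { z : EuclideanSpace ℂ (Fin 2) | ψ ‖z 1‖ < (z 0).re }) = ψ x :=
  dist_to_boundary_of_model_domain_general L ψ ψ' hnonneg hdiff hψ0 hψ'0 hlip
end
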